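/- arXiv:0801.1783 — 5 statements merged into one kernel-verified Lean document; each statement's English description precedes it below -/
import Mathlib

section
/- Let A be a finite alphabet, n an integer with n ≥ 2, and X ⊆ A^ω a Π^0_n-complete set. Then X^≈ is a Π^0_{n+1}-complete subset of (A ∪ {◁})^ω. -/
open Set MeasureTheory

/-! ### Discrete topology on `Option` (the alphabet `A ∪ {◁}`) -/

instance optionTopology (A : Type*) : TopologicalSpace (Option A) := ⊥
instance optionDiscrete (A : Type*) : DiscreteTopology (Option A) := ⟨rfl⟩

/-! ### Finite-word eraser evaluation -/

/-- One step of the left-to-right backspace evaluation; the accumulator holds the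
(reversed) surviving word, `none` meaning the evaluation is undefined. -/
def eraseStep {B : Type*} [DecidableEq B] (e : B) (acc : Option (List B)) (a : B) :
    Option (List B) :=
  acc.bind fun l =>
    if a = e then (match l with | [] => none | _ :: t => some t) else some (a :: l)

/-- `finErase e u` is `some (u^e)` if the evaluation of the eraser `e` in `u` is
defined, and `none` otherwise. -/
def finErase {B : Type*} [DecidableEq B] (e : B) (u : List B) : Option (List B) :=
  (u.foldl (eraseStep e) (some [])).map List.reverse

/-- The length-`n` prefix `x[n]` of an infinite word. -/
def pre {B : Type*} (x : ℕ → B) (n : ℕ) : List B := (List.range n).map x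

/-- The infinite word `y` is the limit of the sequence of words `s n`
(every finite prefix of `y` eventually stabilizes). -/
def LimitsTo {B : Type*} (s : ℕ → ℕ → B) (y : ℕ → B) : Prop :=
  ∀ k : ℕ, ∃ N : ℕ, ∀ p ≥ N, ∀ i < k, s p i = y i

/-- `ErasesTo e x y` expresses that `x^e` is defined, infinite and equal to `y`:
all prefix evaluations `(x[p])^e` are defined, and for every `k` the length-`k`
prefix of `(x[p])^e` is eventually the length-`k` prefix of `y`. -/
def ErasesTo {B : Type*} [DecidableEq B] (e : B) (x y : ℕ → B) : Prop :=
  (∀ n, (finErase e (pre x n)).isSome) ∧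
  ∀ k : ℕ, ∃ N : ℕ, ∀ p ≥ N, ∀ l, finErase e (pre x p) = some l → l.take k = pre y k

/-- `X^≈ ⊆ (A ∪ {◁})^ω`, the eraser symbol `◁` being coded by `none`. -/
def ApproxSet {A : Type*} [DecidableEq A] (X : Set (ℕ → A)) : Set (ℕ → Option A) :=
  {x | ∃ y : ℕ → A, ErasesTo (none : Option A) x (fun i => some (y i)) ∧ y ∈ X}

/-! ### Wadge reducibility -/

/-- `S ≤_W T` : `S` is the preimage of `T` under some continuous map. -/
def WadgeLE {X Y : Type*} [TopologicalSpace X] [TopologicalSpace Y]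
    (S : Set X) (T : Set Y) : Prop :=
  ∃ f : X → Y, Continuous f ∧ S = f ⁻¹' T

/-! ### The Borel hierarchy (finite levels and level `ω`) -/

/-- The class `Σ^0_n` for finite `n ≥ 1`: `Σ^0_1` is the class of open sets and,
for `ξ > 1`, `Σ^0_ξ` is the class of countable unions of sets each of which is the
complement of a `Σ^0_{ξ'}` set for some `1 ≤ ξ' < ξ`. -/
def SigmaFin (X : Type*) [TopologicalSpace X] : ℕ → Set (Set X)
  | 0 => ∅
  | 1 => {s | IsOpen s}
  | (n+2) => {s | ∃ (f : ℕ → Set X) (m : ℕ → Fin (n+2)),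
      (∀ k, 1 ≤ (m k : ℕ) ∧ (f k)ᶜ ∈ SigmaFin X (m k)) ∧ s = ⋃ k, f k}
  termination_by n => n
  decreasing_by exact (m k).isLt

/-- `Π^0_n` : complements of `Σ^0_n` sets. -/
def PiFin (X : Type*) [TopologicalSpace X] (n : ℕ) : Set (Set X) :=
  {s | sᶜ ∈ SigmaFin X n}

/-- `Δ^0_n`. -/
def DeltaFin (X : Type*) [TopologicalSpace X] (n : ℕ) : Set (Set X) :=
  SigmaFin X n ∩ PiFin X n

/-- `Σ^0_ω` : countable unions of sets each in some `Π^0_{ξ'}` with `1 ≤ ξ' < ω`. -/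
def SigmaOmega (X : Type*) [TopologicalSpace X] : Set (Set X) :=
  {s | ∃ (f : ℕ → Set X) (m : ℕ → ℕ),
      (∀ k, 1 ≤ m k ∧ f k ∈ PiFin X (m k)) ∧ s = ⋃ k, f k}

/-- `Π^0_ω` : complements of `Σ^0_ω` sets. -/
def PiOmega (X : Type*) [TopologicalSpace X] : Set (Set X) :=
  {s | sᶜ ∈ SigmaOmega X}

/-- `Δ^0_ω = Σ^0_ω ∩ Π^0_ω`. -/
def DeltaOmega (X : Type*) [TopologicalSpace X] : Set (Set X) :=
  SigmaOmega X ∩ PiOmega X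

/-- `S ⊆ A^ω` is `Π^0_n`-complete: it is `Π^0_n` and every `Π^0_n` subset of a space
of infinite words over a finite alphabet (with the discrete topology) Wadge-reduces
to it. -/
def PiFinComplete {A : Type*} [TopologicalSpace A] (n : ℕ) (S : Set (ℕ → A)) : Prop :=
  S ∈ PiFin (ℕ → A) n ∧
    ∀ (B : Type) [Fintype B] [TopologicalSpace B] [DiscreteTopology B],
      ∀ T : Set (ℕ → B), T ∈ PiFin (ℕ → B) n → WadgeLE T S
/-! ### The alphabet `{0,1} ∪ {◁_n : 0 < n < ω}` and iterated erasing -/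

/-- The alphabet `{0,1} ∪ {◁_n : 0 < n < ω}` : `Sum.inl b` is the binary letter `b`
(`false` for `0`, `true` for `1`) and `Sum.inr k` is the eraser `◁_{k+1}`. -/
abbrev Letter : Type := Bool ⊕ ℕ

/-- The binary letter `0` or `1` viewed in the extended alphabet. -/
def ltr (b : Bool) : Letter := Sum.inl b

/-- The eraser `◁_{k+1}`. -/
def er (k : ℕ) : Letter := Sum.inr k

/-- `X^{≈∞}` for `X ⊆ {0,1}^ω` : those `x` such that each successive eraser
evaluation `x_n = (((x^{◁_1})^{◁_2})^…)^{◁_n}` is defined and infinite, and the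
limit of the `x_n` is defined, infinite, and belongs to `X`. -/
def InfEraseSet (X : Set (ℕ → Bool)) : Set (ℕ → Letter) :=
  {x | ∃ s : ℕ → (ℕ → Letter),
        s 0 = x ∧ (∀ n : ℕ, ErasesTo (er n) (s n) (s (n + 1))) ∧
        ∃ y : ℕ → Bool, y ∈ X ∧ LimitsTo s (fun i => ltr (y i))}

open Classical in
/-- `f(x) = x^◁` if `x^◁` is defined and infinite, and `f(x) = 0^ω` otherwise
(the eraser `◁` is coded by `none`, and `z` plays the role of the letter `0`). -/
noncomputable def eraseFun {A : Type*} [DecidableEq A] (z : A) (x : ℕ → Option A) :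
    ℕ → A :=
  if h : ∃ y : ℕ → A, ErasesTo (none : Option A) x (fun i => some (y i)) then h.choose
  else fun _ => z

open Classical in
/-- `f_{k+1}(x) = x^{◁_{k+1}}` if this is defined and infinite, `0^ω` otherwise. -/
noncomputable def fStep (k : ℕ) (x : ℕ → Letter) : ℕ → Letter :=
  if h : ∃ y : ℕ → Letter, ErasesTo (er k) x y then h.choose else fun _ => ltr false

/-- `fFun 0 = id` and `fFun (k+1) = f_{k+1}`. -/
noncomputable def fFun : ℕ → (ℕ → Letter) → (ℕ → Letter)
  | 0 => id
  | (k+1) => fStep k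

/-- `fIter n = f_n ∘ … ∘ f_1` (with `fIter 0 = id`). -/
noncomputable def fIter : ℕ → (ℕ → Letter) → (ℕ → Letter)
  | 0 => id
  | (n+1) => fun x => fStep n (fIter n x)

open Classical in
/-- `f_∞(x) = lim_{n<ω} (f_n ∘ … ∘ f_1)(x)` if this limit is defined and infinite
(and over `{0,1}`), and `f_∞(x) = 0^ω` otherwise. -/
noncomputable def fInf (x : ℕ → Letter) : ℕ → Bool :=
  if h : ∃ y : ℕ → Bool, LimitsTo (fun n => fIter n x) (fun i => ltr (y i)) then h.choose
  else fun _ => false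

/-- The set of infinite binary words containing infinitely many `1`s. -/
def InfManyOnes : Set (ℕ → Bool) := {y | {i | y i = true}.Infinite}
/-! ### The languages `L_n`, `L_∞`, `W`, and `ω`-powers -/

/-- Successive evaluation of the erasers `◁_1, …, ◁_n` (coded by
`Sum.inr 0, …, Sum.inr (n-1)`) on a finite word over `{0,1,◁_1,…,◁_n}`;
`none` if some evaluation is undefined. -/
def eraseChain (n : ℕ) (u : List (Bool ⊕ Fin n)) : Option (List (Bool ⊕ Fin n)) :=
  (List.finRange n).foldl (fun acc i => acc.bind (finErase (Sum.inr i))) (some u)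

/-- The language `L_n ⊆ {0,1,◁_1,…,◁_n}^*`: the words whose successive eraser
evaluations (first `◁_1`, then `◁_2`, …, then `◁_n`, each being defined) yield a
word in `0^*1`. -/
def Lword (n : ℕ) : Language (Bool ⊕ Fin n) :=
  {u | ∃ v, eraseChain n u = some v ∧
        ∃ k : ℕ, v = List.replicate k (Sum.inl false) ++ [Sum.inl true]}

/-- The eight-letter alphabet `{0, 1, α, B, C, D, E, β}`, coded as
`0, 1, 2, 3, 4, 5, 6, 7` respectively. -/
abbrev Gam : Type := Fin 8

/-- The code `α B^j C^j D^j E^j β` of the eraser `◁_j`. -/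
def eraserCode (j : ℕ) : List Gam :=
  (2 : Gam) :: (List.replicate j (3 : Gam) ++ List.replicate j (4 : Gam) ++
    List.replicate j (5 : Gam) ++ List.replicate j (6 : Gam) ++ [(7 : Gam)])

/-- Encoding of a letter of `{0,1,◁_1,…,◁_n}` over `{0, 1, α, B, C, D, E, β}` :
binary letters are kept, and `◁_j` is replaced by its code. -/
def encLetter {n : ℕ} : Bool ⊕ Fin n → List Gam
  | Sum.inl false => [(0 : Gam)]
  | Sum.inl true => [(1 : Gam)]
  | Sum.inr i => eraserCode ((i : ℕ) + 1)

/-- `L_∞ = ⋃_{n<ω} L_n`, with each eraser replaced by its code. -/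
def Linf : Language Gam :=
  {w | ∃ n : ℕ, ∃ u ∈ Lword n, w = (u.map encLetter).flatten}

/-- A wrong code: a word beginning with `α` and ending with `β` which is not of
the form `α B^j C^j D^j E^j β` for any `j ≥ 1`. -/
def IsWrongCode (v : List Gam) : Prop :=
  v.head? = some (2 : Gam) ∧ v.getLast? = some (7 : Gam) ∧ ¬ ∃ j ≥ 1, v = eraserCode j

/-- `W` : the finite words over `{0, 1, α, B, C, D, E, β}` containing (as a
subword, i.e. an infix) an occurrence of a wrong code. -/
def Wlang : Language Gam := {w | ∃ v, IsWrongCode v ∧ v <:+: w}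

/-- `l` is a prefix of the infinite word `x`. -/
def IsPrefixOfWord {A : Type*} (l : List A) (x : ℕ → A) : Prop :=
  l = (List.range l.length).map x

/-- The `ω`-power `V^ω = {u_1 u_2 … : ∀ n, u_n ∈ V \ {ε}}` of a language of
finite words. -/
def omegaPower {A : Type*} (V : Language A) : Set (ℕ → A) :=
  {x | ∃ u : ℕ → List A, (∀ n, u n ∈ V ∧ u n ≠ []) ∧
        ∀ n, IsPrefixOfWord (((List.range n).map u).flatten) x}

/-- The finite word `v` occurs in the infinite word `x` at position `i`. -/
def OccursAt {A : Type*} [Inhabited A] (v : List A) (x : ℕ → A) (i : ℕ) : Prop :=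
  ∀ j < v.length, x (i + j) = v.getD j default

/-- A wrong code occurs in `x` at position `i`. -/
def WrongAt (x : ℕ → Gam) (i : ℕ) : Prop := ∃ v, IsWrongCode v ∧ OccursAt v x i

/-- The concatenation `w · y` of a finite word and an infinite word. -/
def wordAppend {A : Type*} (w : List A) (y : ℕ → A) : ℕ → A :=
  fun i => if h : i < w.length then w.get ⟨i, h⟩ else y (i - w.length)

/-- `U · Z = {u y : u ∈ U, y ∈ Z}` for `U` a set of finite words and `Z` a set of
infinite words. -/
def concatSet {A : Type*} (U : Language A) (Z : Set (ℕ → A)) : Set (ℕ → A) :=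
  {x | ∃ u ∈ U, ∃ y ∈ Z, x = wordAppend u y}

/-- The language `V = L_∞ ∪ W`. -/
def Vlang : Language Gam := {w | w ∈ Linf ∨ w ∈ Wlang}


/-!
Upper bound: the domain of `x ↦ x^◁` (erasure defined and infinite) is `Π^0_3`, and on this domain
the map pulls `Σ^0_m` sets back to `Σ^0_{m+1}` sets, because "`y` starts with `w`" pulls back to
"the first `|w|` letters of `(x[p])^◁` are eventually `w`", a countable union of closed sets.
Since `n + 1 ≥ 3`, `X^≈` is `Π^0_{n+1}`.

Hardness: a `Σ^0_{n+1}` set is the preimage of a `Σ^0_n` set `S` under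
`x ↦ (x_i, [x ∈ G_i])_i` for some open sets `G_i`, and `Sᶜ` reduces to `X` by some continuous `g`.
The bits `[x ∈ G_i]` are only guessed in the limit (each guess changes at most once), so the
reduction writes, stage by stage, the part of `g` fixed by the current guess, backspacing only
down to the longest common prefix with the previous stage's output. Once a prefix of the true
input is guessed correctly, the corresponding prefix of the output is never erased again, so the
erasure of the written word is exactly `g` of the true input.
-/

section Prefix

variable {C : Type*}

@[simp]
theorem pre_length (x : ℕ → C) (n : ℕ) : (pre x n).length = n := by
  simp [pre]

@[simp]
theorem getElem_pre (x : ℕ → C) {n i : ℕ} (h : i < (pre x n).length) : (pre x n)[i] = x i := by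
  simp [pre]

theorem pre_map {D : Type*} (f : C → D) (x : ℕ → C) (n : ℕ) :
    pre (fun i => f (x i)) n = (pre x n).map f := by
  simp [pre]

theorem pre_eq_pre_iff {x y : ℕ → C} {n : ℕ} : pre x n = pre y n ↔ ∀ i < n, x i = y i := by
  simp [pre, List.map_inj_left]

theorem take_pre (x : ℕ → C) {n m : ℕ} (h : n ≤ m) : (pre x m).take n = pre x n := by
  rw [pre, pre, ← List.map_take, List.take_range, Nat.min_eq_left h]

theorem pre_prefix_pre (x : ℕ → C) {n m : ℕ} (h : n ≤ m) : pre x n <+: pre x m := by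
  rw [← take_pre x h]
  exact List.take_prefix _ _

theorem pre_eq_pre_of_le {x y : ℕ → C} {n m : ℕ} (h : n ≤ m) (hxy : pre x m = pre y m) :
    pre x n = pre y n := by
  rw [← take_pre x h, ← take_pre y h, hxy]

theorem pre_eq_of_prefix {x : ℕ → C} {n : ℕ} {u : List C} (hu : pre x u.length = u)
    (hn : n ≤ u.length) : pre x n = u.take n := by
  rw [← hu, take_pre x hn]

variable [TopologicalSpace C] [DiscreteTopology C]

theorem isOpen_setOf_pre (m : ℕ) (Φ : List C → Prop) : IsOpen {x : ℕ → C | Φ (pre x m)} := by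
  refine isOpen_iff_forall_mem_open.2 fun x hx => ⟨_, fun y hy => ?_, PiNat.isOpen_cylinder _ x m,
    PiNat.self_mem_cylinder x m⟩
  have hxy : pre y m = pre x m := pre_eq_pre_iff.2 (PiNat.mem_cylinder_iff.1 hy)
  simpa [hxy] using hx

theorem isClosed_setOf_pre (m : ℕ) (Φ : List C → Prop) : IsClosed {x : ℕ → C | Φ (pre x m)} :=
  isOpen_compl_iff.1 (isOpen_setOf_pre m fun l => ¬ Φ l)

theorem IsOpen.exists_pre_subset {U : Set (ℕ → C)} (hU : IsOpen U) {x : ℕ → C} (hx : x ∈ U) :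
    ∃ m, ∀ y, pre y m = pre x m → y ∈ U := by
  obtain ⟨_, ⟨z, m, rfl⟩, hxz, hzU⟩ :=
    (PiNat.isTopologicalBasis_cylinders fun _ => C).exists_subset_of_mem_open hx hU
  refine ⟨m, fun y hy => hzU ?_⟩
  rw [← PiNat.mem_cylinder_iff_eq.1 hxz]
  exact PiNat.mem_cylinder_iff.2 (pre_eq_pre_iff.1 hy)

theorem IsOpen.eq_iUnion_setOf_pre {U : Set (ℕ → C)} (hU : IsOpen U) :
    U = ⋃ w : {w : List C // ∀ y, pre y w.length = w → y ∈ U}, {y | pre y w.1.length = w.1} := by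
  ext x
  simp only [Set.mem_iUnion, Set.mem_ofPred_eq]
  refine ⟨fun hx => ?_, fun ⟨w, hw⟩ => w.2 x hw⟩
  obtain ⟨m, hm⟩ := hU.exists_pre_subset hx
  exact ⟨⟨pre x m, fun y hy => hm y (by simpa using hy)⟩, by simp⟩

theorem continuous_of_forall_exists_pre {D : Type*} [TopologicalSpace D]
    {f : (ℕ → C) → ℕ → D} (h : ∀ i, ∃ m, ∀ x y, pre x m = pre y m → f x i = f y i) :
    Continuous f := by
  refine continuous_pi fun i => ?_
  obtain ⟨m, hm⟩ := h i
  refine continuous_def.2 fun s _ => ?_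
  convert isOpen_setOf_pre m fun v => ∃ x₀ : ℕ → C, pre x₀ m = v ∧ f x₀ i ∈ s using 1
  ext x
  exact ⟨fun hx => ⟨x, rfl, hx⟩, fun ⟨x₀, hpre, hs⟩ => by rwa [Set.mem_preimage, hm x x₀ hpre.symm]⟩

end Prefix

section Borel

variable {X : Type*} [TopologicalSpace X]

theorem sigmaFin_one : SigmaFin X 1 = {s | IsOpen s} := by
  rw [SigmaFin]

theorem mem_sigmaFin_add_two {M : ℕ} {s : Set X} :
    s ∈ SigmaFin X (M + 2) ↔ ∃ (f : ℕ → Set X) (m : ℕ → ℕ),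
      (∀ k, 1 ≤ m k ∧ m k ≤ M + 1 ∧ (f k)ᶜ ∈ SigmaFin X (m k)) ∧ s = ⋃ k, f k := by
  rw [SigmaFin]
  constructor
  · rintro ⟨f, m, hm, rfl⟩
    exact ⟨f, fun k => m k, fun k => ⟨(hm k).1, Nat.le_of_lt_succ (m k).isLt, (hm k).2⟩, rfl⟩
  · rintro ⟨f, m, hm, rfl⟩
    exact ⟨f, fun k => ⟨m k, Nat.lt_succ_of_le (hm k).2.1⟩, fun k => ⟨(hm k).1, (hm k).2.2⟩, rfl⟩

theorem SigmaFin.induction {P : ℕ → Set X → Prop} (isOpen : ∀ s, IsOpen s → P 1 s)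
    (iUnion : ∀ (M : ℕ) (f : ℕ → Set X) (m : ℕ → ℕ),
      (∀ k, 1 ≤ m k ∧ m k ≤ M + 1 ∧ (f k)ᶜ ∈ SigmaFin X (m k) ∧ P (m k) (f k)ᶜ) →
        P (M + 2) (⋃ k, f k))
    {m : ℕ} {s : Set X} (hs : s ∈ SigmaFin X m) : P m s := by
  induction m using Nat.strong_induction_on generalizing s with
  | _ m ih =>
    match m, hs with
    | 0, hs => simp [SigmaFin] at hs
    | 1, hs => exact isOpen s (by rwa [sigmaFin_one] at hs)
    | M + 2, hs =>
      obtain ⟨f, m, hm, rfl⟩ := mem_sigmaFin_add_two.1 hs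
      exact iUnion M f m fun k =>
        ⟨(hm k).1, (hm k).2.1, (hm k).2.2, ih _ (by have := (hm k).2.1; omega) (hm k).2.2⟩

theorem iUnion_mem_sigmaFin_of_compl_mem {ι : Type*} [Countable ι] {g : ι → Set X} {M : ℕ}
    (m : ι → ℕ) (h : ∀ i, 1 ≤ m i ∧ m i ≤ M + 1 ∧ (g i)ᶜ ∈ SigmaFin X (m i)) :
    (⋃ i, g i) ∈ SigmaFin X (M + 2) := by
  rw [mem_sigmaFin_add_two]
  rcases isEmpty_or_nonempty ι with hι | hι
  · exact ⟨fun _ => ∅, fun _ => 1, fun _ => ⟨le_rfl, by simp, by simp [sigmaFin_one]⟩, by simp⟩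
  · obtain ⟨σ, hσ⟩ := exists_surjective_nat ι
    exact ⟨g ∘ σ, m ∘ σ, fun k => h (σ k), (hσ.iUnion_comp g).symm⟩

theorem mem_sigmaFin_of_compl_mem {s : Set X} {m M : ℕ} (h1 : 1 ≤ m) (h2 : m ≤ M + 1)
    (hs : sᶜ ∈ SigmaFin X m) : s ∈ SigmaFin X (M + 2) := by
  rw [← Set.iUnion_const (ι := Unit) s]
  exact iUnion_mem_sigmaFin_of_compl_mem (fun _ => m) fun _ => ⟨h1, h2, hs⟩

theorem IsClosed.mem_sigmaFin {F : Set X} (hF : IsClosed F) (M : ℕ) : F ∈ SigmaFin X (M + 2) :=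
  mem_sigmaFin_of_compl_mem le_rfl (by omega) (by simpa [sigmaFin_one] using hF.isOpen_compl)

theorem iUnion_mem_sigmaFin {ι : Type*} [Countable ι] {g : ι → Set X} {M : ℕ}
    (h : ∀ i, g i ∈ SigmaFin X (M + 2)) : (⋃ i, g i) ∈ SigmaFin X (M + 2) := by
  choose f m hm hg using fun i => mem_sigmaFin_add_two.1 (h i)
  rw [Set.iUnion_congr hg, ← Set.iUnion_prod' fun p : ι × ℕ => f p.1 p.2]
  exact iUnion_mem_sigmaFin_of_compl_mem (fun p => m p.1 p.2) fun p => hm p.1 p.2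

theorem union_mem_sigmaFin {s t : Set X} {M : ℕ} (hs : s ∈ SigmaFin X (M + 2))
    (ht : t ∈ SigmaFin X (M + 2)) : s ∪ t ∈ SigmaFin X (M + 2) :=
  Set.union_eq_iUnion ▸ iUnion_mem_sigmaFin (Bool.rec ht hs)

theorem sigmaFin_add_two_mono {M M' : ℕ} (h : M ≤ M') :
    SigmaFin X (M + 2) ⊆ SigmaFin X (M' + 2) := by
  intro s hs
  obtain ⟨f, m, hm, rfl⟩ := mem_sigmaFin_add_two.1 hs
  exact iUnion_mem_sigmaFin_of_compl_mem m fun k =>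
    ⟨(hm k).1, by have := (hm k).2.1; omega, (hm k).2.2⟩

theorem preimage_mem_sigmaFin {Y : Type*} [TopologicalSpace Y] {f : X → Y} (hf : Continuous f)
    {m : ℕ} {s : Set Y} (hs : s ∈ SigmaFin Y m) : f ⁻¹' s ∈ SigmaFin X m := by
  refine SigmaFin.induction (P := fun m s => f ⁻¹' s ∈ SigmaFin X m) (fun s hs => ?_)
    (fun M g m hm => ?_) hs
  · simpa [sigmaFin_one] using hs.preimage hf
  · rw [Set.preimage_iUnion]
    exact iUnion_mem_sigmaFin_of_compl_mem m fun k => ⟨(hm k).1, (hm k).2.1, (hm k).2.2.2⟩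

end Borel

section LongestCommonPrefix

variable {α : Type*} [DecidableEq α]

def longestCommonPrefix : List α → List α → List α
  | a :: l, b :: m => if a = b then a :: longestCommonPrefix l m else []
  | _, _ => []

theorem longestCommonPrefix_prefix_left : ∀ l m : List α, longestCommonPrefix l m <+: l
  | [], _ | _ :: _, [] => by simp [longestCommonPrefix]
  | a :: l, b :: m => by
    by_cases h : a = b
    · simpa [longestCommonPrefix, h] using longestCommonPrefix_prefix_left l m
    · simp [longestCommonPrefix, h]

theorem longestCommonPrefix_prefix_right : ∀ l m : List α, longestCommonPrefix l m <+: m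
  | [], _ | _ :: _, [] => by simp [longestCommonPrefix]
  | a :: l, b :: m => by
    by_cases h : a = b
    · subst h
      simpa [longestCommonPrefix] using longestCommonPrefix_prefix_right l m
    · simp [longestCommonPrefix, h]

theorem prefix_longestCommonPrefix {w l m : List α} (hl : w <+: l) (hm : w <+: m) :
    w <+: longestCommonPrefix l m := by
  induction w generalizing l m with
  | nil => exact List.nil_prefix
  | cons c w ih =>
    obtain ⟨l', rfl, hl'⟩ := List.cons_prefix_iff.1 hl
    obtain ⟨m', rfl, hm'⟩ := List.cons_prefix_iff.1 hm
    simpa [longestCommonPrefix] using ih hl' hm'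

end LongestCommonPrefix

section Eraser

variable {A : Type*}

/-- The accumulator of `finErase` when the surviving word is `v`. -/
def stackOf (v : List A) : List (Option A) := (v.map some).reverse

variable [DecidableEq A]

theorem foldl_eraseStep_map_some (v u : List A) :
    (u.map some).foldl (eraseStep none) (some (stackOf v)) = some (stackOf (v ++ u)) := by
  induction u generalizing v with
  | nil => simp
  | cons a u ih => simpa [eraseStep, stackOf] using ih (v ++ [a])

theorem foldl_eraseStep_replicate_none {s : List (Option A)} {r : ℕ} (hr : r ≤ s.length) :
    (List.replicate r none).foldl (eraseStep none) (some s) = some (s.drop r) := by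
  induction r generalizing s with
  | zero => simp
  | succ r ih =>
    obtain _ | ⟨b, s⟩ := s
    · simp at hr
    · rw [List.replicate_succ, List.foldl_cons]
      simpa [eraseStep] using ih (s := s) (by simpa using hr)

theorem foldl_eraseStep_replicate_none_stackOf (v : List A) {r : ℕ} (hr : r ≤ v.length) :
    (List.replicate r none).foldl (eraseStep none) (some (stackOf v))
      = some (stackOf (v.take (v.length - r))) := by
  rw [foldl_eraseStep_replicate_none (by simpa [stackOf] using hr), stackOf, stackOf,
    List.drop_reverse, List.map_take]
  simp

theorem foldl_eraseStep_pad (a : A) (v : List A) :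
    [some a, none].foldl (eraseStep none) (some (stackOf v)) = some (stackOf v) := by
  simp [eraseStep]

def KeepsPrefix (w v : List A) (l : List (Option A)) : Prop :=
  ∀ r, ∃ u, w <+: u ∧ (l.take r).foldl (eraseStep none) (some (stackOf v)) = some (stackOf u)

theorem KeepsPrefix.append {w v v₁ : List A} {l₁ l₂ : List (Option A)} (h₁ : KeepsPrefix w v l₁)
    (hv : l₁.foldl (eraseStep none) (some (stackOf v)) = some (stackOf v₁))
    (h₂ : KeepsPrefix w v₁ l₂) : KeepsPrefix w v (l₁ ++ l₂) := by
  intro r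
  rcases le_or_gt r l₁.length with hr | hr
  · simpa [List.take_append, Nat.sub_eq_zero_of_le hr] using h₁ r
  · rw [List.take_append, List.take_of_length_le hr.le, List.foldl_append, hv]
    exact h₂ _

theorem keepsPrefix_replicate_none {w v : List A} {r : ℕ} (hw : w <+: v)
    (hr : w.length + r ≤ v.length) : KeepsPrefix w v (List.replicate r none) := by
  intro r'
  rw [List.take_replicate, foldl_eraseStep_replicate_none_stackOf v (by omega)]
  exact ⟨_, List.prefix_take_iff.2 ⟨hw, by omega⟩, rfl⟩

theorem keepsPrefix_map_some {w v : List A} (hw : w <+: v) (u : List A) :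
    KeepsPrefix w v (u.map some) := by
  intro r
  rw [← List.map_take, foldl_eraseStep_map_some]
  exact ⟨_, hw.trans (List.prefix_append _ _), rfl⟩

theorem keepsPrefix_pad {w v : List A} (hw : w <+: v) (a : A) :
    KeepsPrefix w v [some a, none] := by
  rintro (_ | _ | r)
  · exact ⟨v, hw, rfl⟩
  · exact ⟨v ++ [a], hw.trans (List.prefix_append _ _), by simp [eraseStep, stackOf]⟩
  · exact ⟨v, hw, by simpa using foldl_eraseStep_pad a v⟩

/-- Turns the surviving word `v` into `v'` through their longest common prefix; the final
`a ◁` keeps the block nonempty. -/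
def rewriteBlock (a : A) (v v' : List A) : List (Option A) :=
  List.replicate (v.length - (longestCommonPrefix v v').length) none
    ++ (v'.drop (longestCommonPrefix v v').length).map some ++ [some a, none]

theorem foldl_rewriteBlock (a : A) (v v' : List A) :
    (rewriteBlock a v v').foldl (eraseStep none) (some (stackOf v)) = some (stackOf v') := by
  have hv := longestCommonPrefix_prefix_left v v'
  have hv' := longestCommonPrefix_prefix_right v v'
  have hlen := hv.length_le
  rw [rewriteBlock, List.foldl_append, List.foldl_append,
    foldl_eraseStep_replicate_none_stackOf v (Nat.sub_le _ _), Nat.sub_sub_self hlen,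
    ← List.prefix_iff_eq_take.1 hv, foldl_eraseStep_map_some, foldl_eraseStep_pad,
    List.prefix_iff_eq_append.1 hv']

theorem keepsPrefix_rewriteBlock (a : A) {w v v' : List A} (hw : w <+: v) (hw' : w <+: v') :
    KeepsPrefix w v (rewriteBlock a v v') := by
  set L := longestCommonPrefix v v'
  have hwL : w <+: L := prefix_longestCommonPrefix hw hw'
  have hLv : L <+: v := longestCommonPrefix_prefix_left v v'
  have hLv' : L <+: v' := longestCommonPrefix_prefix_right v v'
  have hpop := foldl_eraseStep_replicate_none_stackOf v (Nat.sub_le v.length L.length)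
  rw [Nat.sub_sub_self hLv.length_le, ← List.prefix_iff_eq_take.1 hLv] at hpop
  have hpush := foldl_eraseStep_map_some L (v'.drop L.length)
  rw [List.prefix_iff_eq_append.1 hLv'] at hpush
  refine ((keepsPrefix_replicate_none hw ?_).append hpop
    (keepsPrefix_map_some hwL _)).append ?_ (keepsPrefix_pad hw' a)
  · have := hwL.length_le
    have := hLv.length_le
    omega
  · rw [List.foldl_append, hpop, hpush]

end Eraser

theorem ErasesTo.unique {B : Type*} [DecidableEq B] {e : B} {x y y' : ℕ → B}
    (h : ErasesTo e x y) (h' : ErasesTo e x y') : y = y' := by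
  funext i
  obtain ⟨N, hN⟩ := h.2 (i + 1)
  obtain ⟨N', hN'⟩ := h'.2 (i + 1)
  obtain ⟨l, hl⟩ := Option.isSome_iff_exists.1 (h.1 (max N N'))
  have hpre := (hN _ (le_max_left _ _) l hl).symm.trans (hN' _ (le_max_right _ _) l hl)
  exact pre_eq_pre_iff.1 hpre i (by omega)

theorem exists_pre_eq {C : Type*} {w : ℕ → List C} (hlen : ∀ k, (w k).length = k)
    (hco : ∀ k k', k ≤ k' → w k <+: w k') : ∃ y : ℕ → C, ∀ k, pre y k = w k := by
  refine ⟨fun i => (w (i + 1))[i]'(by simp [hlen]), fun k => List.ext_getElem (by simp [hlen])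
    fun i hi _ => ?_⟩
  simp only [getElem_pre]
  exact (hco (i + 1) k (by simpa using hi)).getElem _

section UpperBound

variable {A : Type*} [DecidableEq A]

theorem mem_approxSet_iff_of_erasesTo {X : Set (ℕ → A)} {x : ℕ → Option A} {y : ℕ → A}
    (h : ErasesTo none x fun i => some (y i)) : x ∈ ApproxSet X ↔ y ∈ X := by
  refine ⟨fun ⟨y', hy', hX⟩ => ?_, fun hy => ⟨y, h, hy⟩⟩
  have hyy' := h.unique hy'
  rwa [show y = y' from funext fun i => Option.some_injective A (congrFun hyy' i)]

variable (A) in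
def eraseDomain : Set (ℕ → Option A) := {x | ∃ y : ℕ → A, ErasesTo none x fun i => some (y i)}

variable (A) in
def finEraseDefined : Set (ℕ → Option A) := {x | ∀ p, (finErase none (pre x p)).isSome}

def finEraseStable (N : ℕ) (w : List A) : Set (ℕ → Option A) :=
  {x | ∀ p ≥ N, ∀ l, finErase none (pre x p) = some l → l.take w.length = w.map some}

theorem erasesTo_iff {x : ℕ → Option A} {y : ℕ → A} :
    (ErasesTo none x fun i => some (y i)) ↔
      x ∈ finEraseDefined A ∧ ∀ k, ∃ N, x ∈ finEraseStable N (pre y k) := by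
  simp [ErasesTo, finEraseDefined, finEraseStable, pre_map]

theorem prefix_of_mem_finEraseStable {x : ℕ → Option A} {N N' : ℕ} {w w' : List A}
    (hx : x ∈ finEraseDefined A) (h : x ∈ finEraseStable N w) (h' : x ∈ finEraseStable N' w')
    (hle : w.length ≤ w'.length) : w <+: w' := by
  obtain ⟨l, hl⟩ := Option.isSome_iff_exists.1 (hx (max N N'))
  have e := h _ (le_max_left _ _) l hl
  have e' := h' _ (le_max_right _ _) l hl
  have hw : w.map some = (w'.take w.length).map some := by
    rw [← e, List.map_take, ← e', List.take_take, min_eq_left hle]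
  exact List.prefix_iff_eq_take.2 (List.map_injective_iff.2 (Option.some_injective A) hw)

theorem eraseDomain_eq : eraseDomain A = finEraseDefined A ∩
    ⋂ k, ⋃ N, ⋃ w : {w : List A // w.length = k}, finEraseStable N w.1 := by
  ext x
  simp only [Set.mem_inter_iff, Set.mem_iInter, Set.mem_iUnion]
  constructor
  · rintro ⟨y, hy⟩
    obtain ⟨hx, hst⟩ := erasesTo_iff.1 hy
    exact ⟨hx, fun k => (hst k).imp fun N hN => ⟨⟨pre y k, pre_length y k⟩, hN⟩⟩
  · rintro ⟨hx, hst⟩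
    choose N w hw using hst
    obtain ⟨y, hy⟩ := exists_pre_eq (fun k => (w k).2) fun k k' hk =>
      prefix_of_mem_finEraseStable hx (hw k) (hw k') (by simpa [(w k).2, (w k').2] using hk)
    exact ⟨y, erasesTo_iff.2 ⟨hx, fun k => ⟨N k, by rw [hy]; exact hw k⟩⟩⟩

theorem approxSet_iUnion {ι : Type*} (S : ι → Set (ℕ → A)) :
    ApproxSet (⋃ i, S i) = ⋃ i, ApproxSet (S i) := by
  ext x
  simp only [ApproxSet, Set.mem_ofPred_eq, Set.mem_iUnion]
  exact ⟨fun ⟨y, hy, i, hi⟩ => ⟨i, y, hy, hi⟩, fun ⟨i, y, hy, hi⟩ => ⟨y, hy, i, hi⟩⟩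

theorem approxSet_compl (S : Set (ℕ → A)) : ApproxSet Sᶜ = eraseDomain A \ ApproxSet S := by
  ext x
  refine ⟨fun ⟨y, hy, hyS⟩ => ⟨⟨y, hy⟩, fun hx => hyS ((mem_approxSet_iff_of_erasesTo hy).1 hx)⟩,
    fun ⟨⟨y, hy⟩, hx⟩ => ⟨y, hy, fun hyS => hx ⟨y, hy, hyS⟩⟩⟩

theorem approxSet_compl_eq_inter {S : Set (ℕ → A)} {G : Set (ℕ → Option A)}
    (h : ApproxSet S = eraseDomain A ∩ G) : ApproxSet Sᶜ = eraseDomain A ∩ Gᶜ := by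
  rw [approxSet_compl, h, Set.sdiff_self_inter, Set.sdiff_eq]

theorem approxSet_setOf_pre (w : List A) :
    ApproxSet {y | pre y w.length = w} = eraseDomain A ∩ ⋃ N, finEraseStable N w := by
  ext x
  simp only [Set.mem_inter_iff, Set.mem_iUnion]
  constructor
  · rintro ⟨y, hy, hyw⟩
    obtain ⟨N, hN⟩ := (erasesTo_iff.1 hy).2 w.length
    exact ⟨⟨y, hy⟩, N, by rwa [← hyw]⟩
  · rintro ⟨⟨y, hy⟩, N, hN⟩
    obtain ⟨hx, hst⟩ := erasesTo_iff.1 hy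
    obtain ⟨N', hN'⟩ := hst w.length
    exact ⟨y, hy, (prefix_of_mem_finEraseStable hx hN' hN (by simp)).eq_of_length (by simp)⟩

theorem isClosed_finEraseDefined : IsClosed (finEraseDefined A) := by
  rw [show finEraseDefined A = ⋂ p, {x | (finErase none (pre x p)).isSome} by
    ext; simp [finEraseDefined]]
  exact isClosed_iInter fun p => isClosed_setOf_pre p fun v => (finErase none v).isSome

theorem isClosed_finEraseStable (N : ℕ) (w : List A) : IsClosed (finEraseStable N w) := by
  rw [show finEraseStable N w = ⋂ p, {x | N ≤ p → ∀ l, finErase none (pre x p) = some l →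
      l.take w.length = w.map some} by ext; simp [finEraseStable]]
  exact isClosed_iInter fun p => isClosed_setOf_pre p fun v =>
    N ≤ p → ∀ l, finErase none v = some l → l.take w.length = w.map some

variable [Countable A]

theorem compl_eraseDomain_mem_sigmaFin : (eraseDomain A)ᶜ ∈ SigmaFin (ℕ → Option A) 3 := by
  rw [eraseDomain_eq, Set.compl_inter, Set.compl_iInter]
  refine union_mem_sigmaFin (mem_sigmaFin_of_compl_mem (m := 2) (by omega) le_rfl ?_)
    (iUnion_mem_sigmaFin_of_compl_mem (fun _ => 2) fun k => ⟨by omega, le_rfl, ?_⟩)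
  · rw [compl_compl]
    exact isClosed_finEraseDefined.mem_sigmaFin 0
  · rw [compl_compl]
    exact iUnion_mem_sigmaFin fun N => iUnion_mem_sigmaFin fun w =>
      (isClosed_finEraseStable N w.1).mem_sigmaFin 0

variable [TopologicalSpace A] [DiscreteTopology A]

theorem exists_approxSet_eq_inter_of_isOpen {U : Set (ℕ → A)} (hU : IsOpen U) :
    ∃ G ∈ SigmaFin (ℕ → Option A) 2, ApproxSet U = eraseDomain A ∩ G := by
  refine ⟨⋃ w : {w : List A // ∀ y, pre y w.length = w → y ∈ U}, ⋃ N, finEraseStable N w.1,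
    ?_, ?_⟩
  · exact iUnion_mem_sigmaFin fun w => iUnion_mem_sigmaFin fun N =>
      (isClosed_finEraseStable N w.1).mem_sigmaFin 0
  · conv_lhs => rw [hU.eq_iUnion_setOf_pre]
    simp only [approxSet_iUnion, approxSet_setOf_pre, Set.inter_iUnion]

theorem exists_approxSet_eq_inter {m : ℕ} {S : Set (ℕ → A)} (hS : S ∈ SigmaFin (ℕ → A) m) :
    ∃ G ∈ SigmaFin (ℕ → Option A) (m + 1), ApproxSet S = eraseDomain A ∩ G := by
  refine SigmaFin.induction (P := fun m S => ∃ G ∈ SigmaFin (ℕ → Option A) (m + 1),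
    ApproxSet S = eraseDomain A ∩ G) (fun U hU => exists_approxSet_eq_inter_of_isOpen hU)
    (fun M f m hm => ?_) hS
  choose G hG hfG using fun k => (hm k).2.2.2
  refine ⟨⋃ k, (G k)ᶜ, iUnion_mem_sigmaFin_of_compl_mem (fun k => m k + 1) fun k =>
    ⟨by omega, by have := (hm k).2.1; omega, by rw [compl_compl]; exact hG k⟩, ?_⟩
  simp only [approxSet_iUnion, Set.inter_iUnion]
  congr! with k
  simpa using approxSet_compl_eq_inter (hfG k)

theorem approxSet_mem_piFin {n : ℕ} (hn : 2 ≤ n) {X : Set (ℕ → A)}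
    (hX : X ∈ PiFin (ℕ → A) n) : ApproxSet X ∈ PiFin (ℕ → Option A) (n + 1) := by
  obtain ⟨G, hG, hXG⟩ := exists_approxSet_eq_inter (m := n) hX
  obtain ⟨M, rfl⟩ : ∃ M, n = M + 2 := ⟨n - 2, by omega⟩
  have hXG' := approxSet_compl_eq_inter hXG
  rw [compl_compl] at hXG'
  show (ApproxSet X)ᶜ ∈ SigmaFin _ (M + 3)
  rw [hXG', Set.compl_inter, compl_compl]
  exact union_mem_sigmaFin (sigmaFin_add_two_mono (by omega) compl_eraseDomain_mem_sigmaFin) hG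

end UpperBound

section Jump

variable {B : Type*}

open Classical in
noncomputable def tagWith (G : ℕ → Set (ℕ → B)) (x : ℕ → B) : ℕ → B × Bool :=
  fun i => (x i, decide (x ∈ G i))

/-- Reads off `tagWith (G k)` from `tagWith` of the family `n ↦ G n.unpair.1 n.unpair.2`. -/
def retag (k : ℕ) (w : ℕ → B × Bool) : ℕ → B × Bool :=
  fun e => ((w e).1, (w (Nat.pair k e)).2)

theorem retag_tagWith (G : ℕ → ℕ → Set (ℕ → B)) (k : ℕ) (x : ℕ → B) :
    retag k (tagWith (fun n => G n.unpair.1 n.unpair.2) x) = tagWith (G k) x := by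
  funext e
  simp [retag, tagWith]

variable [TopologicalSpace B]

theorem continuous_retag (k : ℕ) : Continuous (retag (B := B) k) :=
  continuous_pi fun e => (continuous_fst.comp (continuous_apply e)).prodMk
    (continuous_snd.comp (continuous_apply _))

theorem exists_tagWith_of_mem_sigmaFin_two {S : Set (ℕ → B)} (hS : S ∈ SigmaFin (ℕ → B) 2) :
    ∃ (G : ℕ → Set (ℕ → B)) (S' : Set (ℕ → B × Bool)),
      (∀ e, IsOpen (G e)) ∧ S' ∈ SigmaFin (ℕ → B × Bool) 1 ∧ S = tagWith G ⁻¹' S' := by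
  obtain ⟨f, m, hm, rfl⟩ := mem_sigmaFin_add_two.1 hS
  have hopen : ∀ k, IsOpen (f k)ᶜ := fun k => by
    obtain ⟨h1, h2, hfk⟩ := hm k
    simpa [show m k = 1 by omega, sigmaFin_one] using hfk
  refine ⟨fun k => (f k)ᶜ, ⋃ k, {w | (w k).2 = false}, hopen, ?_, ?_⟩
  · rw [sigmaFin_one]
    exact isOpen_iUnion fun k =>
      (isOpen_discrete {false}).preimage
        (continuous_snd.comp (continuous_apply (A := fun _ => B × Bool) k))
  · ext x
    simp [tagWith]

theorem exists_tagWith_of_mem_sigmaFin_succ {m : ℕ} (hm : 1 ≤ m) {S : Set (ℕ → B)}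
    (hS : S ∈ SigmaFin (ℕ → B) (m + 1)) :
    ∃ (G : ℕ → Set (ℕ → B)) (S' : Set (ℕ → B × Bool)),
      (∀ e, IsOpen (G e)) ∧ S' ∈ SigmaFin (ℕ → B × Bool) m ∧ S = tagWith G ⁻¹' S' := by
  obtain ⟨m, rfl⟩ : ∃ m', m = m' + 1 := ⟨m - 1, by omega⟩
  induction m using Nat.strong_induction_on generalizing S with
  | _ m ih =>
    rcases m with _ | M
    · exact exists_tagWith_of_mem_sigmaFin_two hS
    obtain ⟨f, l, hl, rfl⟩ := mem_sigmaFin_add_two.1 hS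
    have hpiece : ∀ k, ∃ (G : ℕ → Set (ℕ → B)) (T : Set (ℕ → B × Bool)) (j : ℕ),
        (∀ e, IsOpen (G e)) ∧ 1 ≤ j ∧ j ≤ M + 1 ∧ Tᶜ ∈ SigmaFin _ j ∧ f k = tagWith G ⁻¹' T := by
      intro k
      obtain ⟨hl1, hlM, hfk⟩ := hl k
      by_cases h1 : l k = 1
      -- a closed piece needs no new bits: it is a preimage under the first projection
      · refine ⟨fun _ => ∅, {w | (fun i => (w i).1) ∈ f k}, 1, fun _ => isOpen_empty, le_rfl,
          by omega, ?_, rfl⟩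
        exact preimage_mem_sigmaFin (continuous_pi fun i =>
          continuous_fst.comp (continuous_apply (A := fun _ => B × Bool) i)) (h1 ▸ hfk)
      · obtain ⟨G, S', hG, hS', hfS'⟩ := ih (l k - 2) (by omega) (S := (f k)ᶜ) (by omega)
          (by rwa [show l k - 2 + 1 + 1 = l k by omega])
        refine ⟨G, S'ᶜ, l k - 1, hG, by omega, by omega, ?_, ?_⟩
        · rwa [compl_compl, show l k - 1 = l k - 2 + 1 by omega]
        · rw [Set.preimage_compl, ← hfS', compl_compl]
    choose G T j hG hj1 hjM hT hfT using hpiece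
    refine ⟨fun n => G n.unpair.1 n.unpair.2, ⋃ k, retag k ⁻¹' T k, fun n => hG _ _,
      iUnion_mem_sigmaFin_of_compl_mem j fun k => ⟨hj1 k, hjM k, ?_⟩, ?_⟩
    · rw [← Set.preimage_compl]
      exact preimage_mem_sigmaFin (continuous_retag k) (hT k)
    · ext x
      simp [← Set.preimage_comp, Function.comp_def, retag_tagWith, hfT]

end Jump

theorem exists_le_lt_succ {f : ℕ → ℕ} (hf : ∀ p, p ≤ f p) {q : ℕ} (h0 : f 0 ≤ q) :
    ∃ p, f p ≤ q ∧ q < f (p + 1) := by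
  classical
  have hex : ∃ p, q < f (p + 1) := ⟨q, Nat.lt_of_lt_of_le (Nat.lt_succ_self q) (hf (q + 1))⟩
  refine ⟨Nat.find hex, ?_, Nat.find_spec hex⟩
  rcases h : Nat.find hex with _ | p
  · exact h0
  · exact not_lt.1 (Nat.find_min hex (by omega))

section Determined

variable {D A : Type*}

def extendWith (c : D) (u : List D) : ℕ → D := fun i => u.getD i c

theorem pre_extendWith (c : D) (u : List D) : pre (extendWith c u) u.length = u :=
  List.ext_getElem (by simp) fun i _ h => by simp [extendWith, List.getElem?_eq_getElem h]

def Determines (g : (ℕ → D) → ℕ → A) (u : List D) (k : ℕ) : Prop :=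
  ∀ y y' : ℕ → D, pre y u.length = u → pre y' u.length = u → pre (g y) k = pre (g y') k

open Classical in
/-- The longest prefix, of length at most `u.length`, of the output of `g` that is fixed by
the finite input `u`. -/
noncomputable def determinedOutput (g : (ℕ → D) → ℕ → A) (c : D) (u : List D) : List A :=
  pre (g (extendWith c u)) (Nat.findGreatest (Determines g u) u.length)

theorem pre_prefix_determinedOutput {g : (ℕ → D) → ℕ → A} (c : D) {z : ℕ → D} {k m : ℕ}
    (hmod : ∀ y, pre y m = pre z m → pre (g y) k = pre (g z) k) {u : List D}
    (hu : pre z m <+: u) (hk : k ≤ u.length) : pre (g z) k <+: determinedOutput g c u := by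
  have hm : m ≤ u.length := by simpa using hu.length_le
  have hext : ∀ y, pre y u.length = u → pre (g y) k = pre (g z) k := fun y hy =>
    hmod y (by rw [pre_eq_of_prefix hy hm, List.prefix_iff_eq_take.1 hu, pre_length])
  have hdet : Determines g u k := fun y y' hy hy' => (hext y hy).trans (hext y' hy').symm
  rw [determinedOutput, ← hext _ (pre_extendWith c u)]
  classical
  exact pre_prefix_pre _ (Nat.le_findGreatest hk hdet)

theorem Continuous.exists_pre_modulus [TopologicalSpace D] [DiscreteTopology D]
    [TopologicalSpace A] [DiscreteTopology A] {g : (ℕ → D) → ℕ → A} (hg : Continuous g)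
    (z : ℕ → D) (k : ℕ) : ∃ m, ∀ y, pre y m = pre z m → pre (g y) k = pre (g z) k :=
  ((isOpen_setOf_pre k fun v => v = pre (g z) k).preimage hg).exists_pre_subset (x := z) rfl

end Determined

section Approximation

variable {B A : Type*} (G : ℕ → Set (ℕ → B)) (g : (ℕ → B × Bool) → ℕ → A) (c : B × Bool)

open Classical in
noncomputable def approxBit (i : ℕ) (v : List B) : Bool :=
  decide (∀ y, pre y v.length = v → y ∈ G i)

noncomputable def approxTag (x : ℕ → B) (p : ℕ) : List (B × Bool) :=
  pre (fun i => (x i, approxBit G i (pre x p))) p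

noncomputable def stageOutput (x : ℕ → B) (p : ℕ) : List A :=
  determinedOutput g c (approxTag G x p)

theorem stageOutput_zero (x : ℕ → B) : stageOutput G g c x 0 = [] := by
  rw [stageOutput, determinedOutput, ← List.length_eq_zero_iff, pre_length]
  classical
  exact Nat.eq_zero_of_le_zero ((Nat.findGreatest_le _).trans (by simp [approxTag]))

variable {G g} [TopologicalSpace B] [DiscreteTopology B]

open Classical in
theorem exists_approxBit_eq (hG : ∀ i, IsOpen (G i)) (x : ℕ → B) (i : ℕ) :
    ∃ N, ∀ p ≥ N, approxBit G i (pre x p) = decide (x ∈ G i) := by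
  by_cases hx : x ∈ G i
  · obtain ⟨m, hm⟩ := (hG i).exists_pre_subset hx
    exact ⟨m, fun p hp => by
      simpa [approxBit, hx] using fun y hy => hm y (pre_eq_pre_of_le hp hy)⟩
  · refine ⟨0, fun p _ => ?_⟩
    simp only [approxBit, hx, decide_false, decide_eq_false_iff_not, not_forall]
    exact ⟨x, by rw [pre_length], hx⟩

theorem exists_pre_tagWith_prefix_approxTag (hG : ∀ i, IsOpen (G i)) (x : ℕ → B) (m : ℕ) :
    ∃ N, ∀ p ≥ N, pre (tagWith G x) m <+: approxTag G x p := by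
  choose N hN using exists_approxBit_eq hG x
  refine ⟨max m ((Finset.range m).sup N), fun p hp => ?_⟩
  have hpre : pre (tagWith G x) m = pre (fun i => (x i, approxBit G i (pre x p))) m := by
    refine pre_eq_pre_iff.2 fun i hi => ?_
    rw [tagWith, hN i p (le_trans (Finset.le_sup (Finset.mem_range.2 hi))
      ((le_max_right _ _).trans hp))]
  rw [hpre]
  exact pre_prefix_pre _ ((le_max_left _ _).trans hp)

variable [TopologicalSpace A] [DiscreteTopology A]

theorem exists_pre_prefix_stageOutput (hG : ∀ i, IsOpen (G i)) (hg : Continuous g)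
    (x : ℕ → B) (k : ℕ) : ∃ P, ∀ p ≥ P, pre (g (tagWith G x)) k <+: stageOutput G g c x p := by
  obtain ⟨m, hm⟩ := hg.exists_pre_modulus (tagWith G x) k
  obtain ⟨N, hN⟩ := exists_pre_tagWith_prefix_approxTag hG x m
  exact ⟨max k N, fun p hp => pre_prefix_determinedOutput c hm (hN p ((le_max_right _ _).trans hp))
    (by simpa [approxTag] using (le_max_left _ _).trans hp)⟩

end Approximation

section Machine

variable {B A : Type*} [DecidableEq A] (G : ℕ → Set (ℕ → B)) (g : (ℕ → B × Bool) → ℕ → A)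
  (c : B × Bool) (a : A)

noncomputable def machineWord (x : ℕ → B) : ℕ → List (Option A)
  | 0 => []
  | p + 1 => machineWord x p ++
      rewriteBlock a (stageOutput G g c x p) (stageOutput G g c x (p + 1))

noncomputable def eraserMachine (x : ℕ → B) : ℕ → Option A :=
  fun i => (machineWord G g c a x (i + 1)).getD i (some a)

variable {G g c a}

theorem machineWord_prefix (x : ℕ → B) {p q : ℕ} (h : p ≤ q) :
    machineWord G g c a x p <+: machineWord G g c a x q := by
  induction h with
  | refl => exact List.prefix_refl _
  | step _ ih => exact ih.trans (List.prefix_append _ _)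

theorem le_length_machineWord (x : ℕ → B) (p : ℕ) : p ≤ (machineWord G g c a x p).length := by
  induction p with
  | zero => simp
  | succ p ih => simp [machineWord, rewriteBlock]; omega

theorem pre_eraserMachine (x : ℕ → B) {p q : ℕ} (h : q ≤ (machineWord G g c a x p).length) :
    pre (eraserMachine G g c a x) q = (machineWord G g c a x p).take q := by
  refine List.ext_getElem (by simp; omega) fun i _ _ => ?_
  have hi : i < (machineWord G g c a x (i + 1)).length :=
    Nat.lt_of_lt_of_le (Nat.lt_succ_self i) (le_length_machineWord x _)
  rw [getElem_pre, List.getElem_take, eraserMachine, List.getD_eq_getElem _ _ hi]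
  rcases le_total (i + 1) p with hle | hle
  · exact (machineWord_prefix x hle).getElem hi
  · exact ((machineWord_prefix x hle).getElem _).symm

theorem foldl_machineWord (x : ℕ → B) (p : ℕ) :
    (machineWord G g c a x p).foldl (eraseStep none) (some [])
      = some (stackOf (stageOutput G g c x p)) := by
  induction p with
  | zero => simp [machineWord, stageOutput_zero, stackOf]
  | succ p ih => rw [machineWord, List.foldl_append, ih, foldl_rewriteBlock]

theorem exists_finErase_pre_eraserMachine (x : ℕ → B) (q : ℕ) {w : List A}
    (hw : ∀ p, (machineWord G g c a x p).length ≤ q → q < (machineWord G g c a x (p + 1)).length →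
      w <+: stageOutput G g c x p ∧ w <+: stageOutput G g c x (p + 1)) :
    ∃ u, w <+: u ∧ finErase none (pre (eraserMachine G g c a x) q) = some (u.map some) := by
  obtain ⟨p, hpq, hqp⟩ := exists_le_lt_succ (f := fun p => (machineWord G g c a x p).length)
    (le_length_machineWord x) (q := q) (by simp [machineWord])
  obtain ⟨hw, hw'⟩ := hw p hpq hqp
  obtain ⟨u, hwu, hu⟩ := keepsPrefix_rewriteBlock a hw hw' (q - (machineWord G g c a x p).length)
  refine ⟨u, hwu, ?_⟩
  rw [pre_eraserMachine x hqp.le, machineWord, List.take_append, List.take_of_length_le hpq,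
    finErase, List.foldl_append, foldl_machineWord, hu]
  simp [stackOf]

end Machine

section Hardness

variable {B A : Type*} [DecidableEq A] {G : ℕ → Set (ℕ → B)} {g : (ℕ → B × Bool) → ℕ → A}
  {c : B × Bool} {a : A}

theorem approxTag_eq_of_pre_eq {x x' : ℕ → B} {p : ℕ} (h : pre x p = pre x' p) :
    approxTag G x p = approxTag G x' p := by
  rw [approxTag, approxTag, h]
  exact pre_eq_pre_iff.2 fun i hi => by rw [pre_eq_pre_iff.1 h i hi]

theorem machineWord_eq_of_pre_eq {x x' : ℕ → B} {p : ℕ} (h : pre x p = pre x' p) :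
    machineWord G g c a x p = machineWord G g c a x' p := by
  induction p with
  | zero => rfl
  | succ p ih =>
    rw [machineWord, machineWord, ih (pre_eq_pre_of_le p.le_succ h), stageOutput, stageOutput,
      stageOutput, stageOutput, approxTag_eq_of_pre_eq h,
      approxTag_eq_of_pre_eq (pre_eq_pre_of_le p.le_succ h)]

variable [TopologicalSpace B] [DiscreteTopology B]

theorem continuous_eraserMachine : Continuous (eraserMachine G g c a) :=
  continuous_of_forall_exists_pre fun i => ⟨i + 1, fun x x' h => by
    rw [eraserMachine, eraserMachine, machineWord_eq_of_pre_eq h]⟩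

variable [TopologicalSpace A] [DiscreteTopology A]

theorem erasesTo_eraserMachine (hG : ∀ i, IsOpen (G i)) (hg : Continuous g) (x : ℕ → B) :
    ErasesTo none (eraserMachine G g c a x) fun i => some (g (tagWith G x) i) := by
  have hstate := exists_finErase_pre_eraserMachine (G := G) (g := g) (c := c) (a := a) x
  refine ⟨fun q => ?_, fun k => ?_⟩
  · obtain ⟨u, -, hu⟩ := hstate q (w := []) fun _ _ _ => ⟨List.nil_prefix, List.nil_prefix⟩
    simp [hu]
  obtain ⟨P, hP⟩ := exists_pre_prefix_stageOutput c hG hg x k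
  refine ⟨(machineWord G g c a x P).length, fun q hq l hl => ?_⟩
  obtain ⟨u, hwu, hu⟩ := hstate q fun p _ hqp => by
    have hPp : P ≤ p := by
      by_contra hlt
      have := (machineWord_prefix (G := G) (g := g) (c := c) (a := a) x
        (show p + 1 ≤ P by omega)).length_le
      omega
    exact ⟨hP p hPp, hP (p + 1) (by omega)⟩
  have hk := List.prefix_iff_eq_take.1 hwu
  rw [pre_length] at hk
  rw [hu, Option.some.injEq] at hl
  rw [← hl, ← List.map_take, ← hk]
  exact (pre_map some _ k).symm

theorem wadgeLE_approxSet_of_tagWith [Nonempty B] {T : Set (ℕ → B)}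
    (hG : ∀ i, IsOpen (G i)) {S : Set (ℕ → B × Bool)} (hT : Tᶜ = tagWith G ⁻¹' S)
    {X : Set (ℕ → A)} (hX : WadgeLE Sᶜ X) : WadgeLE T (ApproxSet X) := by
  obtain ⟨g, hg, hgX⟩ := hX
  obtain ⟨b⟩ := ‹Nonempty B›
  let c : B × Bool := (b, true)
  let a : A := g (fun _ => c) 0
  refine ⟨eraserMachine G g c a, continuous_eraserMachine, Set.ext fun x => ?_⟩
  rw [Set.mem_preimage, mem_approxSet_iff_of_erasesTo (erasesTo_eraserMachine hG hg x),
    ← Set.mem_preimage, ← hgX, Set.mem_compl_iff, ← Set.mem_preimage, ← hT, Set.mem_compl_iff,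
    not_not]

end Hardness

/-- Let `A` be a finite alphabet, `n ≥ 2`, and `X ⊆ A^ω` a
`Π^0_n`-complete set. Then `X^≈` is a `Π^0_{n+1}`-complete subset of `(A ∪ {◁})^ω`. -/
theorem approxSet_piComplete_step (A : Type) [Fintype A] [DecidableEq A]
    [TopologicalSpace A] [DiscreteTopology A] (n : ℕ) (hn : 2 ≤ n)
    (X : Set (ℕ → A)) (hX : PiFinComplete n X) :
    PiFinComplete (n + 1) (ApproxSet X) := by
  refine ⟨approxSet_mem_piFin hn hX.1, fun B _ _ _ T hT => ?_⟩
  rcases isEmpty_or_nonempty B with hB | hB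
  · exact ⟨fun _ _ => none, continuous_const, Set.ext fun x => isEmptyElim (x 0)⟩
  obtain ⟨G, S, hG, hS, hTS⟩ := exists_tagWith_of_mem_sigmaFin_succ (by omega) hT
  exact wadgeLE_approxSet_of_tagWith hG hTS (hX.2 (B × Bool) Sᶜ (by simpa [PiFin] using hS))
end

section
/- Fix a letter 0 ∈ A. The function f : (A ∪ {◁})^ω → A^ω defined by f(x) = x^◁ if x^◁ is defined and infinite, and f(x) = 0^ω if x^◁ is finite or undefined, is Borel measurable (the preimage of every open subset of A^ω is a Borel subset of (A ∪ {◁})^ω). -/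
open Set MeasureTheory

/-! The value of `x^◁` is determined letter by letter: its `i`-th letter is the letter that
eventually stands at position `i` of the finite evaluations `(x[p])^◁`. Each of these
evaluations depends on a finite prefix of `x` only, hence is continuous, and "eventually" and
"for every letter" are countable operations, so both the domain of `x ↦ x^◁` and each of its
coordinates are Borel. -/

open Filter

section Prefix

variable {B : Type*}

theorem pre_eq_ofFn (x : ℕ → B) (p : ℕ) : pre x p = List.ofFn fun i : Fin p => x i := by
  rw [List.ofFn_eq_map, pre, ← List.map_coe_finRange_eq_range, List.map_map]
  rfl

theorem take_eq_pre_iff {l : List B} {y : ℕ → B} {k : ℕ} :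
    l.take k = pre y k ↔ ∀ i < k, l[i]? = some (y i) := by
  rw [List.ext_getElem?_iff]
  refine forall_congr' fun i => ?_
  by_cases hi : i < k <;> simp [pre, hi]

theorem isOpen_setOf_pre_s1 [TopologicalSpace B] [DiscreteTopology B] (p : ℕ) (P : List B → Prop) :
    IsOpen {x : ℕ → B | P (pre x p)} := by
  simp_rw [pre_eq_ofFn]
  have hc : Continuous fun (x : ℕ → B) (i : Fin p) => x i :=
    continuous_pi fun i => continuous_apply _
  exact hc.isOpen_preimage {v | P (List.ofFn v)} (isOpen_discrete _)

end Prefix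

section Eventually

variable {B : Type*}

def eraseSeq [DecidableEq B] (e : B) (x : ℕ → B) (p : ℕ) : Option (List B) :=
  finErase e (pre x p)

def EventuallyLetter (s : ℕ → Option (List B)) (i : ℕ) (c : B) : Prop :=
  ∀ᶠ p in atTop, ∀ l, s p = some l → l[i]? = some c

theorem EventuallyLetter.unique {s : ℕ → Option (List B)} {i : ℕ} {c c' : B}
    (hs : ∀ n, (s n).isSome) (h : EventuallyLetter s i c) (h' : EventuallyLetter s i c') :
    c = c' := by
  obtain ⟨p, hp, hp'⟩ := (h.and h').exists
  obtain ⟨l, hl⟩ := Option.isSome_iff_exists.1 (hs p)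
  exact Option.some_injective _ ((hp l hl).symm.trans (hp' l hl))

theorem measurable_eventuallyLetter {X : Type*} [MeasurableSpace X] {s : X → ℕ → Option (List B)}
    (hs : ∀ p (P : Option (List B) → Prop), Measurable fun x => P (s x p)) (i : ℕ) (c : B) :
    Measurable fun x => EventuallyLetter (s x) i c := by
  simp only [EventuallyLetter, eventually_atTop]
  exact .exists fun N => .forall fun p =>
    measurable_const.imp (hs p fun o => ∀ l, o = some l → l[i]? = some c)

variable [DecidableEq B]

theorem erasesTo_iff_s1 {e : B} {x y : ℕ → B} :
    ErasesTo e x y ↔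
      (∀ n, (eraseSeq e x n).isSome) ∧ ∀ i, EventuallyLetter (eraseSeq e x) i (y i) := by
  refine and_congr Iff.rfl ⟨fun h i => ?_, fun h k => ?_⟩
  · exact (eventually_atTop.2 (h (i + 1))).mono fun p hp l hl =>
      take_eq_pre_iff.1 (hp l hl) i i.lt_succ_self
  · refine eventually_atTop.1 ?_
    filter_upwards [(Finset.range k).eventually_all.2 fun i _ => h i] with p hp l hl
    exact take_eq_pre_iff.2 fun i hi => hp i (Finset.mem_range.2 hi) l hl

theorem exists_erasesTo_comp_iff {A : Type*} (g : A → B) {e : B} {x : ℕ → B} :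
    (∃ y : ℕ → A, ErasesTo e x fun i => g (y i)) ↔
      (∀ n, (eraseSeq e x n).isSome) ∧ ∀ i, ∃ a, EventuallyLetter (eraseSeq e x) i (g a) := by
  simp only [erasesTo_iff_s1]
  constructor
  · rintro ⟨y, hdef, hy⟩
    exact ⟨hdef, fun i => ⟨y i, hy i⟩⟩
  · rintro ⟨hdef, h⟩
    choose y hy using h
    exact ⟨y, hdef, hy⟩

end Eventually

section EraseFun

variable {A : Type*} [DecidableEq A]

theorem eraseFun_apply_eq_iff (z : A) (x : ℕ → Option A) (i : ℕ) (a : A) :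
    eraseFun z x i = a ↔
      ((∃ y : ℕ → A, ErasesTo none x fun j => some (y j)) ∧
          EventuallyLetter (eraseSeq none x) i (some a)) ∨
        ((¬ ∃ y : ℕ → A, ErasesTo none x fun j => some (y j)) ∧ z = a) := by
  unfold eraseFun
  split_ifs with h
  · obtain ⟨hdef, hy⟩ := erasesTo_iff_s1.1 h.choose_spec
    simp only [h, true_and, not_true_eq_false, false_and, or_false]
    refine ⟨fun ha => ha ▸ hy i, fun ha => Option.some_injective _ (hy i |>.unique hdef ha)⟩
  · simp [h]

theorem measurableSet_eraseFun_apply_eq [Countable A] (z : A) (i : ℕ) (a : A) :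
    MeasurableSet[borel (ℕ → Option A)] {x | eraseFun z x i = a} := by
  let := borel (ℕ → Option A)
  have hseq : ∀ p (P : Option (List (Option A)) → Prop),
      Measurable fun x => P (eraseSeq none x p) := fun p P =>
    measurableSet_setOfPred.1 <| MeasurableSpace.measurableSet_generateFrom <|
      isOpen_setOf_pre_s1 p fun w => P (finErase none w)
  have hdom : Measurable fun x => ∃ y : ℕ → A, ErasesTo none x fun j => some (y j) := by
    simp_rw [exists_erasesTo_comp_iff]
    exact (Measurable.forall fun n => hseq n fun o => o.isSome).and
      (.forall fun j : ℕ => .exists fun b : A => measurable_eventuallyLetter hseq j (some b))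
  simp_rw [eraseFun_apply_eq_iff]
  exact ((hdom.and (measurable_eventuallyLetter hseq i _)).or (hdom.not.and measurable_const)).setOf

end EraseFun

theorem eraseFun_borel_general (A : Type) [Fintype A] [DecidableEq A] [TopologicalSpace A] (z : A) :
    ∀ U : Set (ℕ → A), IsOpen U →
      MeasurableSet[borel (ℕ → Option A)] (eraseFun z ⁻¹' U) := by
  let := borel (ℕ → Option A)
  -- `A` is finite, so `ℕ → A` is second countable and its open sets are product-measurable.
  let : MeasurableSpace A := ⊤
  have : OpensMeasurableSpace A := ⟨le_top⟩
  have hf : Measurable (eraseFun z) := measurable_pi_iff.2 fun i =>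
    measurable_to_countable' fun a => measurableSet_eraseFun_apply_eq z i a
  exact fun U hU => hf hU.measurableSet

/-- The function `f : (A ∪ {◁})^ω → A^ω`, `f(x) = x^◁` if `x^◁` is
defined and infinite and `f(x) = 0^ω` otherwise (the letter `0` being `z`), is Borel
measurable: the preimage of every open set is Borel. -/
theorem eraseFun_borel (A : Type) [Fintype A] [DecidableEq A] [TopologicalSpace A]
    [DiscreteTopology A] (z : A) :
    ∀ U : Set (ℕ → A), IsOpen U →
      MeasurableSet[borel (ℕ → Option A)] (eraseFun z ⁻¹' U) :=
  eraseFun_borel_general A z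
end

section
/- Let X be the set of infinite words over {0,1} that contain infinitely many occurrences of the letter 1. Then (X^{≈∞})^≈ ≤_W X^{≈∞}; that is, there exists a continuous function f from ({0,1} ∪ {◁_n : 0 < n < ω} ∪ {◁})^ω to ({0,1} ∪ {◁_n : 0 < n < ω})^ω such that (X^{≈∞})^≈ = f^{-1}(X^{≈∞}). -/
open Set MeasureTheory

/-! The reduction relabels letter by letter: `◁ ↦ ◁_1` and `◁_n ↦ ◁_{n+1}`. Since eraser
evaluation commutes with injective relabellings, `x^◁` becomes the first stage of the iterated
evaluation of the relabelled word, and the later stages are the shifted stages of `x^◁`.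
Conversely, no stage after the first contains `◁_1`, so every stage of an iterated evaluation of
a relabelled word is itself a relabelled word. -/

section Limits

variable {B C : Type*} {s : ℕ → ℕ → B} {y : ℕ → B}

theorem LimitsTo.map (h : LimitsTo s y) (g : B → C) : LimitsTo (fun n => g ∘ s n) (g ∘ y) :=
  fun k => (h k).imp fun _ hN p hp i hi => congrArg g (hN p hp i hi)

theorem limitsTo_succ_iff : LimitsTo (fun n => s (n + 1)) y ↔ LimitsTo s y := by
  refine ⟨fun h k => ?_, fun h k => ?_⟩
  · obtain ⟨N, hN⟩ := h k
    refine ⟨N + 1, fun p hp => ?_⟩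
    obtain ⟨q, rfl⟩ : ∃ q, p = q + 1 := ⟨p - 1, by omega⟩
    exact hN q (by omega)
  · obtain ⟨N, hN⟩ := h k
    exact ⟨N, fun p hp => hN (p + 1) (by omega)⟩

end Limits

theorem pre_comp {B C : Type*} (g : B → C) (x : ℕ → B) (n : ℕ) :
    pre (g ∘ x) n = (pre x n).map g :=
  (List.map_map ..).symm

section Erasing

variable {B : Type*} [DecidableEq B]

theorem foldl_eraseStep_forall (p : B → Prop) (e : B) (u : List B) {acc : Option (List B)}
    (hacc : ∀ m, acc = some m → ∀ a ∈ m, p a) (hu : ∀ a ∈ u, a ≠ e → p a) {l : List B}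
    (hl : u.foldl (eraseStep e) acc = some l) : ∀ a ∈ l, p a := by
  induction u generalizing acc with
  | nil => exact hacc l hl
  | cons b u ih =>
    refine ih ?_ (fun a ha => hu a (List.mem_cons_of_mem b ha)) hl
    intro m hm
    rcases acc with _ | m₀
    · simp [eraseStep] at hm
    have hm₀ := hacc m₀ rfl
    by_cases hbe : b = e
    · rcases m₀ with _ | ⟨c, m₀⟩ <;>
        simp only [eraseStep, hbe, reduceIte, Option.bind_some, reduceCtorEq,
          Option.some.injEq] at hm
      exact hm ▸ fun a ha => hm₀ a (List.mem_cons_of_mem c ha)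
    · simp only [eraseStep, hbe, Option.bind_some, reduceIte, Option.some.injEq] at hm
      exact hm ▸ List.forall_mem_cons.2 ⟨hu b List.mem_cons_self hbe, hm₀⟩

theorem mem_of_finErase_eq_some {e : B} {u l : List B} (h : finErase e u = some l) {a : B}
    (ha : a ∈ l) : a ≠ e ∧ a ∈ u := by
  obtain ⟨m, hm, rfl⟩ := Option.map_eq_some_iff.1 h
  exact foldl_eraseStep_forall (fun a => a ≠ e ∧ a ∈ u) e u (by simp)
    (fun a ha hae => ⟨hae, ha⟩) hm a (List.mem_reverse.1 ha)

theorem ErasesTo.apply_ne_and_mem_range {e : B} {x y : ℕ → B} (h : ErasesTo e x y) (i : ℕ) :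
    y i ≠ e ∧ y i ∈ Set.range x := by
  obtain ⟨N, hN⟩ := h.2 (i + 1)
  obtain ⟨l, hl⟩ := Option.isSome_iff_exists.1 (h.1 N)
  have hyi : y i ∈ l := by
    refine List.mem_of_mem_take (i := i + 1) ?_
    rw [hN N le_rfl l hl]
    exact List.mem_map_of_mem List.self_mem_range_succ
  obtain ⟨hne, hmem⟩ := mem_of_finErase_eq_some hl hyi
  obtain ⟨j, -, hj⟩ := List.mem_map.1 hmem
  exact ⟨hne, j, hj⟩

variable {C : Type*} [DecidableEq C] {g : B → C}

theorem eraseStep_map (hg : Function.Injective g) (e : B) (acc : Option (List B)) (a : B) :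
    eraseStep (g e) (acc.map (List.map g)) (g a) = (eraseStep e acc a).map (List.map g) := by
  rcases acc with _ | _ | ⟨b, l⟩ <;> by_cases h : a = e <;> simp [eraseStep, h, hg.eq_iff]

theorem finErase_map (hg : Function.Injective g) (e : B) (u : List B) :
    finErase (g e) (u.map g) = (finErase e u).map (List.map g) := by
  have := List.foldl_hom (Option.map (List.map g)) (l := u) (init := some [])
    (g₂ := fun acc a => eraseStep (g e) acc (g a)) (eraseStep_map hg e)
  simp only [finErase, List.foldl_map, Option.map_map]
  simp_all [Function.comp_def, List.map_reverse]

theorem erasesTo_comp_iff (hg : Function.Injective g) {e : B} {x y : ℕ → B} :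
    ErasesTo (g e) (g ∘ x) (g ∘ y) ↔ ErasesTo e x y := by
  simp [ErasesTo, pre_comp, finErase_map hg, ← List.map_take,
    (List.map_injective_iff.2 hg).eq_iff]

end Erasing

def succEraser : Letter → Letter := Sum.map id Nat.succ

def shiftErasers (a : Option Letter) : Letter := a.elim (er 0) succEraser

theorem succEraser_injective : Function.Injective succEraser :=
  Sum.map_injective.2 ⟨Function.injective_id, Nat.succ_injective⟩

theorem shiftErasers_injective : Function.Injective shiftErasers := by
  rintro (_ | _ | _) (_ | _ | _) h <;> simp_all [shiftErasers, succEraser, er]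

theorem mem_range_succEraser {a : Letter} (ha : a ≠ er 0) : a ∈ Set.range succEraser := by
  rcases a with b | _ | k
  exacts [⟨Sum.inl b, rfl⟩, absurd rfl ha, ⟨Sum.inr k, rfl⟩]

theorem shiftErasers_mem_infEraseSet {X : Set (ℕ → Bool)} {x : ℕ → Option Letter}
    (hx : x ∈ ApproxSet (InfEraseSet X)) : shiftErasers ∘ x ∈ InfEraseSet X := by
  obtain ⟨y, hxy, t, rfl, ht, z, hz, htz⟩ := hx
  refine ⟨fun | 0 => shiftErasers ∘ x | n + 1 => succEraser ∘ t n, rfl, ?_, z, hz,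
    limitsTo_succ_iff.1 (htz.map succEraser)⟩
  rintro (_ | n)
  · exact (erasesTo_comp_iff shiftErasers_injective).2 hxy
  · exact (erasesTo_comp_iff succEraser_injective).2 (ht n)

theorem mem_approxSet_of_shiftErasers_mem {X : Set (ℕ → Bool)} {x : ℕ → Option Letter}
    (hx : shiftErasers ∘ x ∈ InfEraseSet X) : x ∈ ApproxSet (InfEraseSet X) := by
  obtain ⟨s, hs0, hs, z, hz, hsz⟩ := hx
  have hne : ∀ n i, s (n + 1) i ≠ er 0 := by
    intro n
    induction n with
    | zero => exact fun i => ((hs 0).apply_ne_and_mem_range i).1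
    | succ n ih =>
      intro i
      obtain ⟨j, hj⟩ := ((hs (n + 1)).apply_ne_and_mem_range i).2
      exact hj ▸ ih j
  set t : ℕ → ℕ → Letter := fun n => Function.invFun succEraser ∘ s (n + 1)
  have hst : ∀ n, s (n + 1) = succEraser ∘ t n := fun n =>
    funext fun i => (Function.invFun_eq (mem_range_succEraser (hne n i))).symm
  refine ⟨t 0, ?_, t, rfl, fun n => ?_, z, hz, ?_⟩
  · have h0 := hs 0
    rw [hs0, hst 0] at h0
    exact (erasesTo_comp_iff (e := none) (y := fun i => some (t 0 i))
      shiftErasers_injective).1 h0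
  · have hn := hs (n + 1)
    rw [hst n, hst (n + 1)] at hn
    exact (erasesTo_comp_iff (e := er n) succEraser_injective).1 hn
  · convert (limitsTo_succ_iff.2 hsz).map (Function.invFun succEraser) using 1
    funext i
    exact (Function.leftInverse_invFun succEraser_injective (ltr (z i))).symm

theorem approxSet_infEraseSet_eq_preimage (X : Set (ℕ → Bool)) :
    ApproxSet (InfEraseSet X) = (shiftErasers ∘ ·) ⁻¹' InfEraseSet X :=
  Set.ext fun _ => ⟨shiftErasers_mem_infEraseSet, mem_approxSet_of_shiftErasers_mem⟩

/-- For `X` the set of infinite binary words with infinitely many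
`1`s, `(X^{≈∞})^≈ ≤_W X^{≈∞}` : some continuous function `f` satisfies
`(X^{≈∞})^≈ = f⁻¹(X^{≈∞})`. -/
theorem approx_infEraseSet_wadge_le :
    WadgeLE (ApproxSet (InfEraseSet InfManyOnes)) (InfEraseSet InfManyOnes) :=
  ⟨(shiftErasers ∘ ·), continuous_pi fun i => continuous_of_discreteTopology.comp
    (continuous_apply i), approxSet_infEraseSet_eq_preimage _⟩
end

section
/- For every integer n ≥ 1, the language L_n is context-free, where L_n is the maximal subset of {0,1,◁_1,◁_2,…,◁_n}^* such that evaluating successively the erasers ◁_1, then ◁_2, …, then ◁_n (each evaluation being required to be defined, i.e. no eraser ever erases the empty word) sends every word of L_n to a word in 0^*1. -/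
open Set MeasureTheory

/-!
Evaluating one eraser `e` on a word `w` gives `a₁ ⋯ aₘ` exactly when `w = d₀ a₁ d₁ ⋯ aₘ dₘ` with
every `aᵢ ≠ e` and every `dᵢ` a Dyck word for the brackets (letter, `e`). Iterating, the words on which `◁_1, …, ◁_k`
evaluate to `a₁ ⋯ aₘ` are the words `c₀ a₁ c₁ ⋯ aₘ cₘ` with every `cᵢ` in the language `C_k` of
words that `◁_1, …, ◁_k` erase completely. Substituting `a ↦ a C_k` in the Dyck grammar of
`◁_{k+1}` gives `C_{k+1} = C_k D_k` with `D_k → ε | a C_k D_k ◁_{k+1} C_k D_k`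
(`a ∉ {◁_1, …, ◁_{k+1}}`), so `C_k = D_0 ⋯ D_{k-1}` and `L_n` is generated by
`S → C_n 0 S | C_n 1 C_n`.
-/

section FinErase

variable {B : Type*} [DecidableEq B] {e a : B} {u v u' v' : List B}

@[simp] lemma finErase_nil : finErase e [] = some [] := rfl

lemma finErase_append_singleton_of_ne (ha : a ≠ e) (u : List B) :
    finErase e (u ++ [a]) = (finErase e u).map (· ++ [a]) := by
  unfold finErase
  rw [List.foldl_append]
  cases u.foldl (eraseStep e) (some []) <;> simp [eraseStep, ha]

lemma finErase_append_singleton_self_eq_some :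
    finErase e (u ++ [e]) = some v ↔ ∃ b, finErase e u = some (v ++ [b]) := by
  unfold finErase
  rw [List.foldl_append]
  rcases u.foldl (eraseStep e) (some []) with _ | _ | ⟨b, l⟩
  · simp [eraseStep]
  · simp [eraseStep]
  · simp [eraseStep, eq_comm]

lemma finErase_append (hu : finErase e u = some u') (hv : finErase e v = some v') :
    finErase e (u ++ v) = some (u' ++ v') := by
  induction v using List.reverseRecOn generalizing v' with
  | nil => simp_all
  | append_singleton v a ih =>
    rw [← List.append_assoc]
    by_cases ha : a = e
    · subst ha
      obtain ⟨b, hb⟩ := finErase_append_singleton_self_eq_some.1 hv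
      exact finErase_append_singleton_self_eq_some.2 ⟨b, by simpa using ih hb⟩
    · rw [finErase_append_singleton_of_ne ha] at hv ⊢
      obtain ⟨v'', hv'', rfl⟩ := Option.map_eq_some_iff.1 hv
      simp [ih hv'']

lemma finErase_of_notMem (h : e ∉ u) : finErase e u = some u := by
  induction u using List.reverseRecOn with
  | nil => rfl
  | append_singleton u a ih =>
    have ha : a ≠ e := by rintro rfl; simp at h
    rw [finErase_append_singleton_of_ne ha, ih (by simp_all)]
    rfl

lemma finErase_subset (h : finErase e u = some v) : v ⊆ u := by
  induction u using List.reverseRecOn generalizing v with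
  | nil => simp_all
  | append_singleton u a ih =>
    by_cases ha : a = e
    · subst ha
      obtain ⟨b, hb⟩ := finErase_append_singleton_self_eq_some.1 h
      exact fun x hx => List.mem_append_left _ (ih hb (List.mem_append_left _ hx))
    · rw [finErase_append_singleton_of_ne ha] at h
      obtain ⟨v', hv', rfl⟩ := Option.map_eq_some_iff.1 h
      intro x hx
      simp only [List.mem_append, List.mem_singleton] at hx ⊢
      exact hx.imp_left (@ih _ hv' x)

lemma notMem_of_finErase (h : finErase e u = some v) : e ∉ v := by
  induction u using List.reverseRecOn generalizing v with
  | nil => simp_all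
  | append_singleton u a ih =>
    by_cases ha : a = e
    · subst ha
      obtain ⟨b, hb⟩ := finErase_append_singleton_self_eq_some.1 h
      exact fun hv => ih hb (List.mem_append_left _ hv)
    · rw [finErase_append_singleton_of_ne ha] at h
      obtain ⟨v', hv', rfl⟩ := Option.map_eq_some_iff.1 h
      simpa [Ne.symm ha] using ih hv'

lemma finErase_cons_append_cons (ha : a ≠ e) (hu : finErase e u = some [])
    (hv : finErase e v = some []) : finErase e (a :: (u ++ e :: v)) = some [] := by
  have hau : finErase e ([a] ++ u) = some [a] :=
    finErase_append (finErase_of_notMem (by simpa using ha.symm)) hu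
  have haue : finErase e ([a] ++ u ++ [e]) = some [] :=
    finErase_append_singleton_self_eq_some.2 ⟨a, hau⟩
  simpa using finErase_append haue hv

end FinErase

inductive IsDyck {B : Type*} (e : B) : List B → Prop
  | nil : IsDyck e []
  | node {a : B} {d₁ d₂ : List B} (ha : a ≠ e) (h₁ : IsDyck e d₁) (h₂ : IsDyck e d₂) :
      IsDyck e (a :: (d₁ ++ e :: d₂))

lemma IsDyck.append {B : Type*} {e : B} {d d' : List B} (h : IsDyck e d) (h' : IsDyck e d') :
    IsDyck e (d ++ d') := by
  induction h with
  | nil => exact h'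
  | node ha h₁ _ _ ih₂ => simpa using IsDyck.node ha h₁ ih₂

inductive Interleave {α : Type*} (P : List α → Prop) : List α → List α → Prop
  | nil : Interleave P [] []
  | cons (a : α) {c v y : List α} (hc : P c) (h : Interleave P v y) :
      Interleave P (a :: v) (a :: (c ++ y))

namespace Interleave

variable {α : Type*} {P : List α → Prop} {a : α} {v v₁ v₂ y y₁ y₂ : List α}

lemma self (hP : P []) : ∀ v : List α, Interleave P v v
  | [] => nil
  | a :: v => by simpa using cons a hP (self hP v)

lemma nil_left_iff : Interleave P [] y ↔ y = [] :=
  ⟨fun h => by cases h; rfl, by rintro rfl; exact nil⟩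

lemma singleton_left_iff : Interleave P [a] y ↔ ∃ c, P c ∧ y = a :: c := by
  constructor
  · rintro (_ | ⟨_, hc, h⟩)
    exact ⟨_, hc, by rw [nil_left_iff.1 h, List.append_nil]⟩
  · rintro ⟨c, hc, rfl⟩
    simpa using cons a hc nil

lemma append (h₁ : Interleave P v₁ y₁) (h₂ : Interleave P v₂ y₂) :
    Interleave P (v₁ ++ v₂) (y₁ ++ y₂) := by
  induction h₁ with
  | nil => exact h₂
  | cons a hc _ ih => simpa using cons a hc ih

lemma exists_of_append_left (h : Interleave P (v₁ ++ v₂) y) :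
    ∃ y₁ y₂, y = y₁ ++ y₂ ∧ Interleave P v₁ y₁ ∧ Interleave P v₂ y₂ := by
  induction v₁ generalizing y with
  | nil => exact ⟨[], y, rfl, nil, h⟩
  | cons a v₁ ih =>
    obtain _ | ⟨_, hc, h'⟩ := h
    obtain ⟨y₁, y₂, rfl, h₁, h₂⟩ := ih h'
    exact ⟨_, y₂, by simp, cons a hc h₁, h₂⟩

lemma exists_of_append_singleton_left (h : Interleave P (v ++ [a]) y) :
    ∃ y' c, y = y' ++ a :: c ∧ Interleave P v y' ∧ P c := by
  obtain ⟨y', _, rfl, h', ha⟩ := exists_of_append_left h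
  obtain ⟨c, hc, rfl⟩ := singleton_left_iff.1 ha
  exact ⟨y', c, rfl, h', hc⟩

end Interleave

theorem exists_isDyck_interleave_of_finErase {B : Type*} [DecidableEq B] {e : B} {w v : List B}
    (h : finErase e w = some v) :
    ∃ d y, IsDyck e d ∧ Interleave (IsDyck e) v y ∧ w = d ++ y := by
  induction w using List.reverseRecOn generalizing v with
  | nil => exact ⟨[], [], .nil, by simp_all [Interleave.nil_left_iff]⟩
  | append_singleton w a ih =>
    by_cases ha : a = e
    · subst ha
      obtain ⟨b, hb⟩ := finErase_append_singleton_self_eq_some.1 h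
      have hbe : b ≠ a := fun hb' => notMem_of_finErase hb (by simp [hb'])
      obtain ⟨d, y, hd, hy, rfl⟩ := ih hb
      obtain ⟨y', c, rfl, hy', hc⟩ := hy.exists_of_append_singleton_left
      -- the erased letter `b` and its block `c` close up into the Dyck word `b c e`,
      -- which joins the block preceding `b`
      have hbc : IsDyck a (b :: (c ++ [a])) := .node hbe hc .nil
      obtain rfl | ⟨v₀, x, rfl⟩ : v = [] ∨ ∃ v₀ x, v = v₀ ++ [x] := by
        simpa using List.eq_nil_or_concat v
      · obtain rfl := Interleave.nil_left_iff.1 hy'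
        exact ⟨d ++ b :: (c ++ [a]), [], hd.append hbc, .nil, by simp⟩
      · obtain ⟨y₀, c₀, rfl, hy₀, hc₀⟩ := hy'.exists_of_append_singleton_left
        refine ⟨d, y₀ ++ x :: (c₀ ++ b :: (c ++ [a])), hd, ?_, by simp⟩
        exact hy₀.append ((Interleave.singleton_left_iff).2 ⟨_, hc₀.append hbc, rfl⟩)
    · rw [finErase_append_singleton_of_ne ha] at h
      obtain ⟨v', hv', rfl⟩ := Option.map_eq_some_iff.1 h
      obtain ⟨d, y, hd, hy, rfl⟩ := ih hv'
      exact ⟨d, y ++ [a], hd, hy.append (Interleave.singleton_left_iff.2 ⟨[], .nil, rfl⟩),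
        by simp⟩

section ChainErase

variable {B : Type*} [DecidableEq B] {es : List B} {e a : B} {u v u' v' : List B}

def chainErase (es : List B) (u : List B) : Option (List B) :=
  es.foldl (fun acc e => acc.bind (finErase e)) (some u)

@[simp] lemma chainErase_nil (u : List B) : chainErase [] u = some u := rfl

lemma chainErase_append_singleton (es : List B) (e : B) (u : List B) :
    chainErase (es ++ [e]) u = (chainErase es u).bind (finErase e) := by
  simp [chainErase, List.foldl_append]

lemma chainErase_of_forall_notMem (h : ∀ e ∈ es, e ∉ u) : chainErase es u = some u := by
  induction es using List.reverseRecOn with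
  | nil => rfl
  | append_singleton es e ih =>
    rw [chainErase_append_singleton, ih (fun e he => h e (by simp [he])), Option.bind_some,
      finErase_of_notMem (h e (by simp))]

lemma chainErase_nil_right (es : List B) : chainErase es [] = some [] :=
  chainErase_of_forall_notMem (by simp)

lemma chainErase_singleton (h : a ∉ es) : chainErase es [a] = some [a] :=
  chainErase_of_forall_notMem fun _ he hea => h (List.mem_singleton.1 hea ▸ he)

lemma chainErase_append (hu : chainErase es u = some u') (hv : chainErase es v = some v') :
    chainErase es (u ++ v) = some (u' ++ v') := by
  induction es using List.reverseRecOn generalizing u' v' with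
  | nil => simp_all
  | append_singleton es e ih =>
    rw [chainErase_append_singleton, Option.bind_eq_some_iff] at hu hv ⊢
    obtain ⟨u₁, hu₁, hu'⟩ := hu
    obtain ⟨v₁, hv₁, hv'⟩ := hv
    exact ⟨_, ih hu₁ hv₁, finErase_append hu' hv'⟩

lemma notMem_of_chainErase (h : chainErase es u = some v) (ha : a ∈ es) : a ∉ v := by
  induction es using List.reverseRecOn generalizing v with
  | nil => simp at ha
  | append_singleton es e ih =>
    rw [chainErase_append_singleton, Option.bind_eq_some_iff] at h
    obtain ⟨m, hm, hv⟩ := h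
    rcases List.mem_append.1 ha with ha | ha
    · exact fun hav => ih hm ha (finErase_subset hv hav)
    · rw [List.mem_singleton.1 ha]
      exact notMem_of_finErase hv

end ChainErase

namespace ContextFreeGrammar

variable {T : Type*}

section Interp

variable {N : Type*} (sem : N → Language T)

def interp (s : List (Symbol T N)) : Language T :=
  (s.map fun
    | .terminal a => {[a]}
    | .nonterminal X => sem X).prod

lemma interp_append (s t : List (Symbol T N)) :
    interp sem (s ++ t) = interp sem s * interp sem t := by
  simp [interp]

@[simp] lemma mem_interp_terminal {a : T} {w : List T} :
    w ∈ interp sem [.terminal a] ↔ w = [a] := by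
  rw [interp, List.map_singleton, List.prod_singleton]
  exact Iff.rfl

@[simp] lemma interp_nonterminal (X : N) : interp sem [.nonterminal X] = sem X := by
  simp [interp]

lemma mem_interp_map_terminal (w : List T) : w ∈ interp sem (w.map .terminal) := by
  induction w with
  | nil => exact (Language.mem_one _).2 rfl
  | cons a w ih =>
    rw [List.map_cons, ← List.singleton_append, interp_append]
    exact ⟨[a], (mem_interp_terminal sem).2 rfl, w, ih, rfl⟩

end Interp

section Soundness

variable {g : ContextFreeGrammar T} {sem : g.NT → Language T}

theorem mem_interp_of_derives (hsem : ∀ r ∈ g.rules, ∀ w ∈ interp sem r.output, w ∈ sem r.input)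
    {s : List (Symbol T g.NT)} {w : List T} (h : g.Derives s (w.map .terminal)) :
    w ∈ interp sem s := by
  induction h using Relation.ReflTransGen.head_induction_on with
  | refl => exact mem_interp_map_terminal sem w
  | head hp _ ih =>
    obtain ⟨r, hr, hrw⟩ := hp
    obtain ⟨p, q, rfl, rfl⟩ := hrw.exists_parts
    simp only [interp_append, Language.mem_mul] at ih ⊢
    obtain ⟨_, ⟨w₁, hw₁, w₂, hw₂, rfl⟩, w₃, hw₃, rfl⟩ := ih
    exact ⟨_, ⟨w₁, hw₁, w₂, by simpa using hsem r hr w₂ hw₂, rfl⟩, w₃, hw₃, rfl⟩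

theorem language_le_of_rules (hsem : ∀ r ∈ g.rules, ∀ w ∈ interp sem r.output, w ∈ sem r.input) :
    g.language ≤ sem g.initial := fun w hw => by
  have hw' := mem_interp_of_derives hsem (w := w) hw
  rw [interp_nonterminal] at hw'
  exact hw'

end Soundness

def Yields (g : ContextFreeGrammar T) (s : List (Symbol T g.NT)) (w : List T) : Prop :=
  g.Derives s (w.map .terminal)

section Yields

variable {g : ContextFreeGrammar T} {s t : List (Symbol T g.NT)} {w w' : List T}

lemma yields_nil : g.Yields [] [] := Derives.refl []

lemma yields_terminal (a : T) : g.Yields [.terminal a] [a] := Derives.refl _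

lemma Yields.append (h : g.Yields s w) (h' : g.Yields t w') : g.Yields (s ++ t) (w ++ w') := by
  unfold Yields
  rw [List.map_append]
  exact (h.append_right t).trans (h'.append_left _)

lemma Yields.of_rule {r : ContextFreeRule T g.NT} (hr : r ∈ g.rules) (h : g.Yields r.output w) :
    g.Yields [.nonterminal r.input] w :=
  (Produces.single ⟨r, hr, ContextFreeRule.Rewrites.input_output⟩).trans h

end Yields

end ContextFreeGrammar

lemma List.take_finRange_add_one {n k : ℕ} (hk : k < n) :
    (List.finRange n).take (k + 1) = (List.finRange n).take k ++ [⟨k, hk⟩] := by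
  rw [List.take_add_one, List.getElem?_eq_getElem (by simpa using hk)]
  simp

namespace Lword

open ContextFreeGrammar

variable {n k : ℕ}

def erasers (n k : ℕ) : List (Bool ⊕ Fin n) := ((List.finRange n).take k).map Sum.inr

lemma erasers_add_one (hk : k < n) : erasers n (k + 1) = erasers n k ++ [.inr ⟨k, hk⟩] := by
  simp [erasers, List.take_finRange_add_one hk]

lemma inr_notMem_erasers (hk : k < n) : (.inr ⟨k, hk⟩ : Bool ⊕ Fin n) ∉ erasers n k := by
  simp [erasers, List.mem_take_iff_getElem]

lemma chainErase_erasers_add_one_eq_some (hk : k < n) {w v : List (Bool ⊕ Fin n)} :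
    chainErase (erasers n (k + 1)) w = some v ↔
      ∃ m, chainErase (erasers n k) w = some m ∧ finErase (.inr ⟨k, hk⟩) m = some v := by
  rw [erasers_add_one hk, chainErase_append_singleton, Option.bind_eq_some_iff]

lemma inl_notMem_erasers (b : Bool) : (.inl b : Bool ⊕ Fin n) ∉ erasers n k := by
  simp [erasers, -List.map_take]

lemma mem_Lword_iff {u : List (Bool ⊕ Fin n)} : u ∈ Lword n ↔
    ∃ k, chainErase (erasers n n) u = some (List.replicate k (.inl false) ++ [.inl true]) := by
  have hchain : eraseChain n u = chainErase (erasers n n) u := by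
    simp [eraseChain, chainErase, erasers, List.foldl_map, List.take_of_length_le]
  change (∃ v, eraseChain n u = some v ∧ _) ↔ _
  rw [hchain]
  exact ⟨fun ⟨_, hv, k, hk⟩ => ⟨k, hk ▸ hv⟩, fun ⟨k, hk⟩ => ⟨_, hk, k, rfl⟩⟩

def cSyms (n k : ℕ) : List (Symbol (Bool ⊕ Fin n) (Option (Fin n))) :=
  ((List.finRange n).take k).map fun j => .nonterminal (some j)

lemma cSyms_add_one (hk : k < n) :
    cSyms n (k + 1) = cSyms n k ++ [.nonterminal (some ⟨k, hk⟩)] := by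
  simp [cSyms, List.take_finRange_add_one hk]

def ruleNil (j : Fin n) : ContextFreeRule (Bool ⊕ Fin n) (Option (Fin n)) := ⟨some j, []⟩

def ruleNode (j : Fin n) (a : Bool ⊕ Fin n) : ContextFreeRule (Bool ⊕ Fin n) (Option (Fin n)) :=
  ⟨some j, [.terminal a] ++ cSyms n j ++ [.nonterminal (some j)] ++ [.terminal (.inr j)] ++
    cSyms n j ++ [.nonterminal (some j)]⟩

def ruleZero (n : ℕ) : ContextFreeRule (Bool ⊕ Fin n) (Option (Fin n)) :=
  ⟨none, cSyms n n ++ [.terminal (.inl false)] ++ [.nonterminal none]⟩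

def ruleOne (n : ℕ) : ContextFreeRule (Bool ⊕ Fin n) (Option (Fin n)) :=
  ⟨none, cSyms n n ++ [.terminal (.inl true)] ++ cSyms n n⟩

open Classical in
/-- The nonterminal `some j` is `D_j` and `none` is `S`; `cSyms n k` is `C_k`. -/
noncomputable abbrev grammar (n : ℕ) : ContextFreeGrammar (Bool ⊕ Fin n) where
  NT := Option (Fin n)
  initial := none
  rules := {ruleZero n, ruleOne n} ∪ Finset.univ.image ruleNil ∪
    ({p : Fin n × (Bool ⊕ Fin n) | p.2 ∉ erasers n (p.1 + 1)} : Finset _).image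
      fun p => ruleNode p.1 p.2

lemma mem_rules {r : ContextFreeRule (Bool ⊕ Fin n) (Option (Fin n))} :
    r ∈ (grammar n).rules ↔ r = ruleZero n ∨ r = ruleOne n ∨ (∃ j, r = ruleNil j) ∨
      ∃ (j : Fin n) (a : Bool ⊕ Fin n), a ∉ erasers n (j + 1) ∧ r = ruleNode j a := by
  simp [grammar, eq_comm, or_assoc]

section Soundness

variable {w : List (Bool ⊕ Fin n)}

def ntLanguage : Option (Fin n) → Language (Bool ⊕ Fin n)
  | some j => {w | chainErase (erasers n (j + 1)) w = some []}
  | none => Lword n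

lemma chainErase_of_mem_interp_cSyms (hk : k ≤ n) (hw : w ∈ interp ntLanguage (cSyms n k)) :
    chainErase (erasers n k) w = some [] := by
  induction k generalizing w with
  | zero =>
    obtain rfl : w = [] := hw
    rfl
  | succ k ih =>
    rw [cSyms_add_one hk, interp_append, interp_nonterminal, Language.mem_mul] at hw
    obtain ⟨w₁, hw₁, w₂, hw₂, rfl⟩ := hw
    have h₁ : chainErase (erasers n (k + 1)) w₁ = some [] :=
      (chainErase_erasers_add_one_eq_some hk).2 ⟨[], ih (by omega) hw₁, rfl⟩
    simpa using chainErase_append h₁ hw₂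

lemma mem_ntLanguage_of_ruleNode {j : Fin n} {a : Bool ⊕ Fin n} (ha : a ∉ erasers n (j + 1))
    (hw : w ∈ interp ntLanguage (ruleNode j a).output) : w ∈ ntLanguage (some j) := by
  simp only [ruleNode, interp_append, interp_nonterminal, Language.mem_mul,
    mem_interp_terminal] at hw
  obtain ⟨_, ⟨_, ⟨_, ⟨_, ⟨_, rfl, y₁, hy₁, rfl⟩, y₂, hy₂, rfl⟩, _, rfl, rfl⟩, y₃, hy₃, rfl⟩,
    y₄, hy₄, rfl⟩ := hw
  rw [erasers_add_one j.isLt, List.mem_append, List.mem_singleton, Fin.eta, not_or] at ha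
  obtain ⟨m₂, hm₂, hm₂e⟩ := (chainErase_erasers_add_one_eq_some j.isLt).1 hy₂
  obtain ⟨m₄, hm₄, hm₄e⟩ := (chainErase_erasers_add_one_eq_some j.isLt).1 hy₄
  have hchain := chainErase_append (chainErase_append (chainErase_append (chainErase_append
    (chainErase_append (chainErase_singleton ha.1) (chainErase_of_mem_interp_cSyms j.isLt.le hy₁))
      hm₂) (chainErase_singleton (inr_notMem_erasers j.isLt)))
    (chainErase_of_mem_interp_cSyms j.isLt.le hy₃)) hm₄
  refine (chainErase_erasers_add_one_eq_some j.isLt).2 ⟨_, hchain, ?_⟩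
  simpa using finErase_cons_append_cons ha.2 hm₂e hm₄e

lemma mem_ntLanguage_of_mem_interp_output :
    ∀ r ∈ (grammar n).rules, ∀ w ∈ interp ntLanguage r.output, w ∈ ntLanguage r.input := by
  intro r hr w hw
  rcases mem_rules.1 hr with rfl | rfl | ⟨j, rfl⟩ | ⟨j, a, ha, rfl⟩
  · simp only [ruleZero, interp_append, interp_nonterminal, Language.mem_mul,
      mem_interp_terminal] at hw
    obtain ⟨_, ⟨w₁, hw₁, _, rfl, rfl⟩, w₂, hw₂, rfl⟩ := hw
    obtain ⟨k, hk⟩ := mem_Lword_iff.1 hw₂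
    refine mem_Lword_iff.2 ⟨k + 1, ?_⟩
    simpa [List.replicate_succ] using chainErase_append (chainErase_append
      (chainErase_of_mem_interp_cSyms le_rfl hw₁) (chainErase_singleton (inl_notMem_erasers _))) hk
  · simp only [ruleOne, interp_append, Language.mem_mul, mem_interp_terminal] at hw
    obtain ⟨_, ⟨w₁, hw₁, _, rfl, rfl⟩, w₂, hw₂, rfl⟩ := hw
    refine mem_Lword_iff.2 ⟨0, ?_⟩
    simpa using chainErase_append (chainErase_append (chainErase_of_mem_interp_cSyms le_rfl hw₁)
      (chainErase_singleton (inl_notMem_erasers _))) (chainErase_of_mem_interp_cSyms le_rfl hw₂)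
  · obtain rfl : w = [] := hw
    exact chainErase_nil_right _
  · exact mem_ntLanguage_of_ruleNode ha hw

end Soundness

section Completeness

variable {c d u v y : List (Bool ⊕ Fin n)}

lemma yields_cSyms_zero : (grammar n).Yields (cSyms n 0) [] := by
  simpa [cSyms] using yields_nil

lemma yields_of_isDyck (hk : k < n) (hd : IsDyck (.inr ⟨k, hk⟩) d)
    (hletters : ∀ a ∈ d, a ∉ erasers n k) (hy : Interleave ((grammar n).Yields (cSyms n k)) d y) :
    (grammar n).Yields [.nonterminal (some ⟨k, hk⟩)] y := by
  induction hd generalizing y with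
  | nil =>
    obtain rfl := Interleave.nil_left_iff.1 hy
    exact Yields.of_rule (r := ruleNil ⟨k, hk⟩) (mem_rules.2 (.inr (.inr (.inl ⟨_, rfl⟩))))
      yields_nil
  | @node a d₁ d₂ ha _ _ ih₁ ih₂ =>
    obtain _ | ⟨_, hc₁, hy'⟩ := hy
    obtain ⟨y₁, _, rfl, hy₁, hy₂'⟩ := hy'.exists_of_append_left
    obtain _ | ⟨_, hc₂, hy₂⟩ := hy₂'
    have ha' : a ∉ erasers n (k + 1) := by
      rw [erasers_add_one hk, List.mem_append, List.mem_singleton, not_or]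
      exact ⟨hletters a (by simp), ha⟩
    refine Yields.of_rule (r := ruleNode ⟨k, hk⟩ a) (mem_rules.2 (.inr (.inr (.inr
      ⟨_, a, ha', rfl⟩)))) ?_
    have hout := (((((yields_terminal a).append hc₁).append
      (ih₁ (fun x hx => hletters x (by simp [hx])) hy₁)).append
        (yields_terminal (.inr ⟨k, hk⟩))).append hc₂).append
      (ih₂ (fun x hx => hletters x (by simp [hx])) hy₂)
    simpa [ruleNode] using hout

lemma interleave_cSyms_add_one (hk : k < n) (hv : Interleave (IsDyck (.inr ⟨k, hk⟩)) v d)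
    (hletters : ∀ a ∈ d, a ∉ erasers n k) (hy : Interleave ((grammar n).Yields (cSyms n k)) d y) :
    Interleave ((grammar n).Yields (cSyms n (k + 1))) v y := by
  induction hv generalizing y with
  | nil =>
    obtain rfl := Interleave.nil_left_iff.1 hy
    exact .nil
  | cons b hd _ ih =>
    obtain _ | @⟨_, c, _, _, hc, hy'⟩ := hy
    obtain ⟨y₁, y₂, rfl, hy₁, hy₂⟩ := hy'.exists_of_append_left
    have hD := yields_of_isDyck hk hd (fun x hx => hletters x (by simp [hx])) hy₁
    have hC : (grammar n).Yields (cSyms n (k + 1)) (c ++ y₁) := by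
      rw [cSyms_add_one hk]
      exact hc.append hD
    simpa using Interleave.cons b hC (ih (fun x hx => hletters x (by simp [hx])) hy₂)

theorem exists_interleave_of_chainErase (hk : k ≤ n)
    (h : chainErase (erasers n k) u = some v) :
    ∃ c y, (grammar n).Yields (cSyms n k) c ∧
      Interleave ((grammar n).Yields (cSyms n k)) v y ∧ u = c ++ y := by
  induction k generalizing v with
  | zero =>
    obtain rfl : u = v := by simpa [erasers] using h
    exact ⟨[], u, yields_cSyms_zero, .self yields_cSyms_zero u, rfl⟩
  | succ k ih =>
    obtain ⟨m, hm, hmv⟩ := (chainErase_erasers_add_one_eq_some hk).1 h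
    obtain ⟨c, y, hc, hy, rfl⟩ := ih (by omega) hm
    obtain ⟨d, z, hd, hz, rfl⟩ := exists_isDyck_interleave_of_finErase hmv
    obtain ⟨y₁, y₂, rfl, hy₁, hy₂⟩ := hy.exists_of_append_left
    have hletters : ∀ a ∈ d ++ z, a ∉ erasers n k := fun a ha hae =>
      notMem_of_chainErase hm hae ha
    refine ⟨c ++ y₁, y₂, ?_, interleave_cSyms_add_one hk hz
      (fun a ha => hletters a (by simp [ha])) hy₂, by simp⟩
    rw [cSyms_add_one hk]
    exact hc.append (yields_of_isDyck hk hd (fun a ha => hletters a (by simp [ha])) hy₁)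

lemma yields_start (hc : (grammar n).Yields (cSyms n n) c)
    (hy : Interleave ((grammar n).Yields (cSyms n n))
      (List.replicate k (.inl false) ++ [.inl true]) y) :
    (grammar n).Yields [.nonterminal none] (c ++ y) := by
  induction k generalizing c y with
  | zero =>
    obtain ⟨c', hc', rfl⟩ := Interleave.singleton_left_iff.1 hy
    refine Yields.of_rule (r := ruleOne n) (mem_rules.2 (.inr (.inl rfl))) ?_
    simpa [ruleOne] using (hc.append (yields_terminal _)).append hc'
  | succ k ih =>
    obtain _ | ⟨_, hc', hy'⟩ := hy
    refine Yields.of_rule (r := ruleZero n) (mem_rules.2 (.inl rfl)) ?_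
    simpa [ruleZero] using (hc.append (yields_terminal _)).append (ih hc' hy')

end Completeness

theorem grammar_language (n : ℕ) : (grammar n).language = Lword n := by
  ext u
  refine ⟨fun hu => language_le_of_rules mem_ntLanguage_of_mem_interp_output hu, fun hu => ?_⟩
  obtain ⟨k, hk⟩ := mem_Lword_iff.1 hu
  obtain ⟨c, y, hc, hy, rfl⟩ := exists_interleave_of_chainErase le_rfl hk
  exact yields_start hc hy

end Lword

/-- For every `n ≥ 1` the language `L_n` is context-free. -/
theorem Lword_isContextFree : ∀ n : ℕ, 1 ≤ n → (Lword n).IsContextFree :=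
  fun n _ => ⟨Lword.grammar n, Lword.grammar_language n⟩
end

section
/- Let Y = (L_∞ ∪ W)^ω and let Y_∞ be the set of all infinite words in Y containing infinitely many occurrences of wrong codes. Then Y_∞ is Π^0_2-complete: Y_∞ is a Π^0_2 subset of {0, 1, α, B, C, D, E, β}^ω and every Π^0_2 set over any finite alphabet Wadge-reduces to Y_∞ via a continuous map. In particular Y_∞ is Wadge equivalent to the set X of infinite binary words containing infinitely many 1s. -/
open Set MeasureTheory

/-- `Y_∞` : the elements of `Y = (L_∞ ∪ W)^ω` containing infinitely many occurrences
of wrong codes. -/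
def Yinfty : Set (ℕ → Gam) :=
  {x | x ∈ omegaPower Vlang ∧ {i | WrongAt x i}.Infinite}

/-! A word with infinitely many occurrences of wrong codes can be cut into finite blocks each
containing one, so it lies in `W^ω ⊆ Y`: thus `Y_∞` is simply the set of words with infinitely
many wrong codes, a `G_δ` set. Coding `1` by the wrong code `αβ` and `0` by `00` reduces `X` to
`Y_∞`. Conversely, every `G_δ` set `⋂ k, U k` of infinite words over a discrete alphabet reduces
to `X`: at step `p`, output `1` exactly when the number of leading sets `U 0, U 1, …` containing
the cylinder of the prefix `x[p]` increases. -/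

open PiNat

section Cylinders

variable {A : Type*} [TopologicalSpace A] [DiscreteTopology A]

theorem exists_cylinder_subset_of_isOpen {U : Set (ℕ → A)} (hU : IsOpen U) {x : ℕ → A}
    (hx : x ∈ U) : ∃ n, cylinder x n ⊆ U := by
  obtain ⟨_, ⟨z, n, rfl⟩, hxz, hzU⟩ :=
    (isTopologicalBasis_cylinders fun _ => A).exists_subset_of_mem_open hx hU
  exact ⟨n, (mem_cylinder_iff_eq.1 hxz).le.trans hzU⟩

theorem continuous_of_forall_cylinder {C : Type*} [TopologicalSpace C] {f : (ℕ → A) → ℕ → C}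
    (hf : ∀ m, ∃ n, ∀ x, ∀ y ∈ cylinder x n, f y m = f x m) : Continuous f := by
  refine continuous_pi fun m => IsLocallyConstant.continuous ?_
  obtain ⟨n, hn⟩ := hf m
  refine (IsLocallyConstant.iff_eventually_eq _).2 fun x => ?_
  filter_upwards [(isOpen_cylinder _ x n).mem_nhds (self_mem_cylinder x n)] with y hy
  exact hn x y hy

theorem isOpen_setOf_occursAt [Inhabited A] (v : List A) (i : ℕ) :
    IsOpen {x : ℕ → A | OccursAt v x i} := by
  simp only [OccursAt, ofPred_forall]
  exact (finite_lt_nat _).isOpen_biInter fun j _ =>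
    (isOpen_discrete {v.getD j default}).preimage (continuous_apply (A := fun _ : ℕ => A) (i + j))

end Cylinders

theorem mem_piFin_two_iff_isGδ {X : Type*} [TopologicalSpace X] {S : Set X} :
    S ∈ PiFin X 2 ↔ IsGδ S := by
  rw [isGδ_iff_eq_iInter_nat, PiFin, mem_ofPred_eq, SigmaFin]
  constructor
  · rintro ⟨f, m, hfm, hS⟩
    refine ⟨fun k => (f k)ᶜ, fun k => ?_, by rw [← compl_iUnion, ← hS, compl_compl]⟩
    obtain ⟨hm, hf⟩ := hfm k
    rwa [show (m k : ℕ) = 1 by omega, SigmaFin] at hf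
  · rintro ⟨U, hU, rfl⟩
    refine ⟨fun k => (U k)ᶜ, fun _ => 1, fun k => ⟨le_rfl, ?_⟩, compl_iInter U⟩
    rw [compl_compl, Fin.val_one, SigmaFin]
    exact hU k

theorem isGδ_setOf_infinite {X : Type*} [TopologicalSpace X] {P : X → ℕ → Prop}
    (hP : ∀ i, IsOpen {x | P x i}) : IsGδ {x | {i | P x i}.Infinite} := by
  have h : {x | {i | P x i}.Infinite} = ⋂ N, ⋃ i ≥ N, {x | P x i} := by
    ext x
    simp [← Nat.frequently_atTop_iff_infinite, Filter.frequently_atTop]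
  rw [h]
  exact .iInter_of_isOpen fun N => isOpen_biUnion fun i _ => hP i

theorem WadgeLE.trans {X Y Z : Type*} [TopologicalSpace X] [TopologicalSpace Y]
    [TopologicalSpace Z] {S : Set X} {T : Set Y} {R : Set Z}
    (hST : WadgeLE S T) (hTR : WadgeLE T R) : WadgeLE S R := by
  obtain ⟨f, hf, rfl⟩ := hST
  obtain ⟨g, hg, rfl⟩ := hTR
  exact ⟨g ∘ f, hg.comp hf, rfl⟩

theorem Monotone.infinite_setOf_lt_succ_iff {c : ℕ → ℕ} (hc : Monotone c) :
    {p | c p < c (p + 1)}.Infinite ↔ ∀ r, ∃ p, r ≤ c p := by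
  constructor
  · intro h r
    induction r with
    | zero => exact ⟨0, Nat.zero_le _⟩
    | succ r ih =>
      obtain ⟨m, hm⟩ := ih
      obtain ⟨p, hp, hmp⟩ := h.exists_gt m
      exact ⟨p + 1, ((hm.trans (hc hmp.le)).trans_lt hp)⟩
  · intro h
    by_contra hfin
    obtain ⟨M, hM⟩ := (Set.not_infinite.1 hfin).bddAbove
    have hbound : ∀ p, c p ≤ c (M + 1) := by
      intro p
      rcases le_total p (M + 1) with hp | hp
      · exact hc hp
      induction p, hp using Nat.le_induction with
      | base => exact le_rfl
      | succ p hp ih =>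
        have : ¬ c p < c (p + 1) := fun hlt => by have := hM hlt; omega
        omega
    obtain ⟨p, hp⟩ := h (c (M + 1) + 1)
    have := hbound p
    omega

section Reduction

variable {B : Type*}

open Classical

noncomputable def coverDepth (U : ℕ → Set (ℕ → B)) (x : ℕ → B) (p : ℕ) : ℕ :=
  Nat.findGreatest (fun r => ∀ k < r, cylinder x p ⊆ U k) p

variable {U : ℕ → Set (ℕ → B)}

theorem coverDepth_mono (U : ℕ → Set (ℕ → B)) (x : ℕ → B) : Monotone (coverDepth U x) :=
  fun _ _ hpq => Nat.findGreatest_mono (fun _ h k hk => (cylinder_anti x hpq).trans (h k hk)) hpq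

theorem coverDepth_congr {x y : ℕ → B} {p : ℕ} (h : y ∈ cylinder x p) :
    coverDepth U y p = coverDepth U x p := by
  rw [coverDepth, coverDepth, mem_cylinder_iff_eq.1 h]

theorem cylinder_subset_of_lt_coverDepth {x : ℕ → B} {p k : ℕ} (hk : k < coverDepth U x p) :
    cylinder x p ⊆ U k :=
  Nat.findGreatest_spec (P := fun r => ∀ k < r, cylinder x p ⊆ U k) (Nat.zero_le p)
    (fun _ h => absurd h (Nat.not_lt_zero _)) k hk

variable [TopologicalSpace B] [DiscreteTopology B]

theorem mem_iInter_iff_unbounded_coverDepth (hU : ∀ k, IsOpen (U k)) (x : ℕ → B) :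
    x ∈ ⋂ k, U k ↔ ∀ r, ∃ p, r ≤ coverDepth U x p := by
  constructor
  · intro hx r
    choose n hn using fun k => exists_cylinder_subset_of_isOpen (hU k) (mem_iInter.1 hx k)
    refine ⟨r + (Finset.range r).sup n, Nat.le_findGreatest (Nat.le_add_right _ _) fun k hk => ?_⟩
    exact (cylinder_anti x ((Finset.le_sup (Finset.mem_range.2 hk)).trans
      (Nat.le_add_left _ _))).trans (hn k)
  · intro h
    refine mem_iInter.2 fun k => ?_
    obtain ⟨p, hp⟩ := h (k + 1)
    exact cylinder_subset_of_lt_coverDepth hp (self_mem_cylinder x p)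

theorem IsGδ.wadgeLE_infManyOnes {T : Set (ℕ → B)} (hT : IsGδ T) : WadgeLE T InfManyOnes := by
  obtain ⟨U, hU, rfl⟩ := isGδ_iff_eq_iInter_nat.1 hT
  refine ⟨fun x p => decide (coverDepth U x p < coverDepth U x (p + 1)), ?_, ?_⟩
  · refine continuous_of_forall_cylinder fun p => ⟨p + 1, fun x y hy => ?_⟩
    rw [coverDepth_congr hy, coverDepth_congr (cylinder_anti x p.le_succ hy)]
  · ext x
    rw [mem_iInter_iff_unbounded_coverDepth hU, mem_preimage, InfManyOnes, mem_ofPred_eq,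
      ← (coverDepth_mono U x).infinite_setOf_lt_succ_iff]
    simp only [decide_eq_true_eq]

end Reduction

theorem List.range'_sub_append_range'_sub {a b c : ℕ} (hab : a ≤ b) (hbc : b ≤ c) :
    List.range' a (b - a) ++ List.range' b (c - b) = List.range' a (c - a) := by
  have := List.range'_append (s := a) (m := b - a) (n := c - b) (step := 1)
  rwa [Nat.one_mul, Nat.add_sub_cancel' hab, show b - a + (c - b) = c - a by omega] at this

theorem mem_omegaPower_of_forall_exists_lt {A : Type*} {V : Language A} {x : ℕ → A}
    (h : ∀ a, ∃ b, a < b ∧ (List.range' a (b - a)).map x ∈ V) : x ∈ omegaPower V := by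
  choose next hlt hmem using h
  set d : ℕ → ℕ := fun n => next^[n] 0
  have hd : ∀ n, d (n + 1) = next (d n) := fun n => Function.iterate_succ_apply' next n 0
  have hprefix : ∀ n,
      ((List.range n).map fun k => (List.range' (d k) (d (k + 1) - d k)).map x).flatten =
        (List.range (d n)).map x := by
    intro n
    induction n with
    | zero => simp [d]
    | succ n ih =>
      rw [List.range_succ, List.map_append, List.flatten_append, ih, List.map_singleton,
        List.flatten_singleton, ← List.map_append, List.range_eq_range', List.range_eq_range']
      simpa using congrArg (List.map x)
        (List.range'_sub_append_range'_sub (Nat.zero_le _) (hd n ▸ (hlt (d n)).le))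
  refine ⟨fun n => (List.range' (d n) (d (n + 1) - d n)).map x, fun n => ⟨?_, ?_⟩, fun n => ?_⟩
  · dsimp only
    rw [hd]
    exact hmem (d n)
  · simpa [hd] using (Nat.sub_pos_of_lt (hlt (d n))).ne'
  · rw [IsPrefixOfWord, hprefix, List.length_map, List.length_range]

theorem OccursAt.map_range'_eq {A : Type*} [Inhabited A] {v : List A} {x : ℕ → A} {i : ℕ}
    (h : OccursAt v x i) : (List.range' i v.length).map x = v := by
  refine List.ext_getElem (by simp) fun j _ hj => ?_
  simp [h j hj, hj]

theorem exists_segment_mem_wlang {x : ℕ → Gam} (hx : {i | WrongAt x i}.Infinite) (a : ℕ) :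
    ∃ b, a < b ∧ (List.range' a (b - a)).map x ∈ Wlang := by
  obtain ⟨i, ⟨v, hv, hocc⟩, hai⟩ := hx.exists_gt a
  refine ⟨i + v.length, hai.trans_le (Nat.le_add_right _ _), v, hv, ?_⟩
  rw [← List.range'_sub_append_range'_sub hai.le (Nat.le_add_right i v.length),
    Nat.add_sub_cancel_left, List.map_append, hocc.map_range'_eq]
  exact (List.suffix_append _ _).isInfix

theorem yinfty_eq_setOf_infinite_wrongAt : Yinfty = {x | {i | WrongAt x i}.Infinite} := by
  ext x
  refine ⟨And.right, fun hx => ⟨mem_omegaPower_of_forall_exists_lt fun a => ?_, hx⟩⟩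
  obtain ⟨b, hab, hb⟩ := exists_segment_mem_wlang hx a
  exact ⟨b, hab, Or.inr hb⟩

theorem isGδ_yinfty : IsGδ Yinfty := by
  rw [yinfty_eq_setOf_infinite_wrongAt]
  refine isGδ_setOf_infinite fun i => ?_
  simp only [WrongAt, ofPred_exists, ofPred_and]
  exact isOpen_iUnion fun v => isOpen_const.inter (isOpen_setOf_occursAt v i)

theorem isWrongCode_two_seven : IsWrongCode [2, 7] := by
  refine ⟨rfl, rfl, ?_⟩
  rintro ⟨j, hj, hcode⟩
  have := congrArg List.length hcode
  simp [eraserCode] at this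
  omega

-- `1 ↦ αβ` and `0 ↦ 00`: every wrong code starts with `α`, so the wrong codes of the image
-- start exactly at the blocks `αβ`.
def onesToWrongCodes (y : ℕ → Bool) : ℕ → Gam :=
  fun i => if y (i / 2) then (if i % 2 = 0 then 2 else 7) else 0

theorem wrongAt_onesToWrongCodes_iff {y : ℕ → Bool} {i : ℕ} :
    WrongAt (onesToWrongCodes y) i ↔ i % 2 = 0 ∧ y (i / 2) = true := by
  constructor
  · rintro ⟨_ | ⟨a, v⟩, ⟨hhead, -⟩, hocc⟩
    · simp at hhead
    have := hocc 0 (by simp)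
    simp only [List.head?_cons, Option.some.injEq] at hhead
    simp only [onesToWrongCodes, Nat.add_zero, List.getD_cons_zero, hhead] at this
    split_ifs at this <;> simp_all
  · rintro ⟨hi, hy⟩
    refine ⟨[2, 7], isWrongCode_two_seven, fun j hj => ?_⟩
    have hj : j = 0 ∨ j = 1 := by simp at hj; omega
    rcases hj with rfl | rfl
    · simp [onesToWrongCodes, hi, hy]
    · simp [onesToWrongCodes, show (i + 1) / 2 = i / 2 by omega,
        show (i + 1) % 2 = 1 by omega, hy]

theorem setOf_wrongAt_onesToWrongCodes (y : ℕ → Bool) :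
    {i | WrongAt (onesToWrongCodes y) i} = (2 * ·) '' {j | y j = true} := by
  ext i
  simp only [wrongAt_onesToWrongCodes_iff, mem_ofPred_eq, mem_image]
  constructor
  · rintro ⟨hi, hy⟩
    exact ⟨i / 2, hy, by omega⟩
  · rintro ⟨j, hj, rfl⟩
    simp [hj]

theorem infManyOnes_wadgeLE_yinfty : WadgeLE InfManyOnes Yinfty := by
  refine ⟨onesToWrongCodes,
    continuous_of_forall_cylinder fun i => ⟨i / 2 + 1, fun y z hz => ?_⟩, ?_⟩
  · simp only [onesToWrongCodes, hz (i / 2) (Nat.lt_succ_self _)]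
  · ext y
    rw [yinfty_eq_setOf_infinite_wrongAt, mem_preimage, mem_ofPred_eq,
      setOf_wrongAt_onesToWrongCodes, infinite_image_iff (mul_right_injective₀ two_ne_zero).injOn]
    rfl

/-- `Y_∞` is `Π^0_2`-complete; in particular it is Wadge
equivalent to the set `X` of infinite binary words containing infinitely many `1`s. -/
theorem Yinfty_pi2_complete :
    PiFinComplete 2 Yinfty ∧ WadgeLE Yinfty InfManyOnes ∧ WadgeLE InfManyOnes Yinfty := by
  refine ⟨⟨mem_piFin_two_iff_isGδ.2 isGδ_yinfty, fun B _ _ _ T hT => ?_⟩,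
    isGδ_yinfty.wadgeLE_infManyOnes, infManyOnes_wadgeLE_yinfty⟩
  exact (mem_piFin_two_iff_isGδ.1 hT).wadgeLE_infManyOnes.trans infManyOnes_wadgeLE_yinfty
end
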